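/- arXiv:1401.7501 — 6 statements merged into one kernel-verified Lean document; each statement's English description precedes it below -/
import Mathlib

section
/- Let K be a Corson compact space, i.e. a compact space homeomorphic to a subspace of Σ(Γ) for some set Γ. Then to any countable family ℱ of closed subsets of K one can assign a countable set M(ℱ) ⊆ K and a continuous retraction r_ℱ : K → K such that: (i) r_ℱ(F) ⊆ F for every F ∈ ℱ; (ii) r_ℱ(K) equals the closure of M(ℱ); and (iii) the assignment ℱ ↦ M(ℱ) is ω-monotone. -/
open Set Cardinal

universe u

/-- `N` is an external network of `S` in `T`. -/
def IsExternalNetwork (T : Type u) [TopologicalSpace T] (N : Set (Set T)) (S : Set T) : Prop :=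
  ∀ a ∈ S, ∀ U : Set T, IsOpen U → a ∈ U → ∃ P ∈ N, a ∈ P ∧ P ⊆ U

/-- `T` is monotonically Sokolov: to each countable family of closed sets one can assign
a continuous retraction keeping each member of the family invariant, together with a
countable external network of the image of the retraction, ω-monotonically. -/
def MonotonicallySokolov (T : Type u) [TopologicalSpace T] : Prop :=
  ∃ (r : Set (Set T) → T → T) (N : Set (Set T) → Set (Set T)),
    (∀ F : Set (Set T), F.Countable → (∀ A ∈ F, IsClosed A) →
      Continuous (r F) ∧ (∀ x, r F (r F x) = r F x) ∧
      (∀ A ∈ F, ∀ x ∈ A, r F x ∈ A) ∧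
      (N F).Countable ∧ IsExternalNetwork T (N F) (Set.range (r F))) ∧
    (∀ F G : Set (Set T), F.Countable → (∀ A ∈ F, IsClosed A) →
      G.Countable → (∀ A ∈ G, IsClosed A) → F ⊆ G → N F ⊆ N G) ∧
    (∀ s : ℕ → Set (Set T), (∀ n, (s n).Countable) → (∀ n, ∀ A ∈ s n, IsClosed A) →
      (∀ n, s n ⊆ s (n + 1)) → N (⋃ n, s n) = ⋃ n, N (s n))

/-- `T` is monotonically ω-monolithic: to each countable set one can assign a countable
external network of its closure, ω-monotonically. -/
def MonotonicallyOmegaMonolithic (T : Type u) [TopologicalSpace T] : Prop :=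
  ∃ O : Set T → Set (Set T),
    (∀ A : Set T, A.Countable → (O A).Countable ∧ IsExternalNetwork T (O A) (closure A)) ∧
    (∀ A B : Set T, A.Countable → B.Countable → A ⊆ B → O A ⊆ O B) ∧
    (∀ s : ℕ → Set T, (∀ n, (s n).Countable) → (∀ n, s n ⊆ s (n + 1)) →
      O (⋃ n, s n) = ⋃ n, O (s n))

/-- `T` is monotonically `κ`-monolithic. -/
def MonotonicallyKappaMonolithic (T : Type u) [TopologicalSpace T] (κ : Cardinal.{u}) : Prop :=
  ∃ O : Set T → Set (Set T),
    (∀ A : Set T, #A ≤ κ →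
      #(O A) ≤ #A + ℵ₀ ∧ IsExternalNetwork T (O A) (closure A)) ∧
    (∀ A B : Set T, #A ≤ κ → #B ≤ κ → A ⊆ B → O A ⊆ O B) ∧
    (∀ (ι : Type u) [LinearOrder ι], #ι ≤ κ →
      ∀ A : ι → Set T, Monotone A → (∀ i, #(A i) ≤ κ) →
        O (⋃ i, A i) = ⋃ i, O (A i))

/-- `T` is monotonically monolithic: monotonically `κ`-monolithic for every infinite `κ`. -/
def MonotonicallyMonolithic (T : Type u) [TopologicalSpace T] : Prop :=
  ∀ κ : Cardinal.{u}, ℵ₀ ≤ κ → MonotonicallyKappaMonolithic T κ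

/-- `T` is a Collins-Roscoe space. -/
def CollinsRoscoe (T : Type u) [TopologicalSpace T] : Prop :=
  ∃ O : T → Set (Set T), (∀ x, (O x).Countable) ∧
    ∀ A : Set T, IsExternalNetwork T (⋃ x ∈ A, O x) (closure A)

set_option linter.unusedSectionVars false

namespace CorsonAux

open scoped Classical

variable {K : Type u} {Γ : Type*} (e : K → Γ → ℝ)

def suppSet (D : Set K) : Set Γ := {γ | ∃ d ∈ D, e d γ ≠ 0}

lemma suppSet_mono {D E : Set K} (h : D ⊆ E) : suppSet e D ⊆ suppSet e E := by
  rintro γ ⟨d, hd, h0⟩; exact ⟨d, h hd, h0⟩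

lemma suppSet_iUnion (D : ℕ → Set K) : suppSet e (⋃ n, D n) = ⋃ n, suppSet e (D n) := by
  ext γ; simp only [suppSet, mem_iUnion, mem_setOf_eq]; tauto

lemma e_zero_of_not_supp {D : Set K} {m : K} (hm : m ∈ D) {γ : Γ}
    (hγ : γ ∉ suppSet e D) : e m γ = 0 := by
  by_contra h0; exact hγ ⟨m, hm, h0⟩

lemma suppSet_countable (hsigma : ∀ x : K, {γ : Γ | e x γ ≠ 0}.Countable)
    {D : Set K} (hD : D.Countable) : (suppSet e D).Countable := by
  have : suppSet e D = ⋃ d ∈ D, {γ | e d γ ≠ 0} := by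
    ext γ; simp [suppSet]
  rw [this]; exact hD.biUnion fun d _ => hsigma d

def box (b : Finset (Γ × ℚ × ℚ)) : Set K :=
  {z | ∀ t ∈ b, (t.2.1 : ℝ) < e z t.1 ∧ e z t.1 < (t.2.2 : ℝ)}

noncomputable def W (F : Set K) (b : Finset (Γ × ℚ × ℚ)) : Set K :=
  if h : (F ∩ box e b).Nonempty then {h.some} else ∅

lemma W_subset (F : Set K) (b : Finset (Γ × ℚ × ℚ)) : W e F b ⊆ F ∩ box e b := by
  unfold W; split
  · rintro x hx; rw [mem_singleton_iff] at hx; subst hx; exact Set.Nonempty.some_mem _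
  · exact empty_subset _

lemma W_countable (F : Set K) (b : Finset (Γ × ℚ × ℚ)) : (W e F b).Countable := by
  unfold W; split
  · exact countable_singleton _
  · exact countable_empty

lemma W_nonempty {F : Set K} {b : Finset (Γ × ℚ × ℚ)} (h : (F ∩ box e b).Nonempty) :
    ∃ m ∈ W e F b, m ∈ F ∩ box e b := by
  refine ⟨h.some, ?_, h.some_mem⟩
  rw [W, dif_pos h]; exact mem_singleton _

noncomputable def step (𝓕 : Set (Set K)) (D : Set K) : Set K :=
  D ∪ ⋃ F ∈ insert Set.univ 𝓕,
      ⋃ b ∈ {b : Finset (Γ × ℚ × ℚ) | ∀ t ∈ b, t.1 ∈ suppSet e D}, W e F b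

lemma subset_step (𝓕 : Set (Set K)) (D : Set K) : D ⊆ step e 𝓕 D := subset_union_left

lemma mem_step {𝓕 : Set (Set K)} {D : Set K} {F : Set K} (hF : F ∈ insert Set.univ 𝓕)
    {b : Finset (Γ × ℚ × ℚ)} (hb : ∀ t ∈ b, t.1 ∈ suppSet e D) {m : K}
    (hm : m ∈ W e F b) : m ∈ step e 𝓕 D := by
  refine subset_union_right ?_
  exact mem_biUnion hF (mem_biUnion hb hm)

lemma step_mono {𝓕 𝓖 : Set (Set K)} {D E : Set K} (hFG : 𝓕 ⊆ 𝓖) (hDE : D ⊆ E) :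
    step e 𝓕 D ⊆ step e 𝓖 E := by
  rintro x (hx | hx)
  · exact subset_step e 𝓖 E (hDE hx)
  · simp only [mem_iUnion, exists_prop] at hx
    obtain ⟨F, hF, b, hb, hxW⟩ := hx
    exact mem_step e (insert_subset_insert hFG hF)
      (fun t ht => suppSet_mono e hDE (hb t ht)) hxW

lemma bset_countable {S : Set Γ} (hS : S.Countable) :
    {b : Finset (Γ × ℚ × ℚ) | ∀ t ∈ b, t.1 ∈ S}.Countable := by
  have h1 : {t : Set (Γ × ℚ × ℚ) | t.Finite ∧ t ⊆ S ×ˢ (univ : Set (ℚ × ℚ))}.Countable :=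
    Set.countable_setOf_finite_subset (hS.prod countable_univ)
  have h2 := h1.preimage (f := fun b : Finset (Γ × ℚ × ℚ) => (b : Set _)) Finset.coe_injective
  apply h2.mono
  intro b hb
  exact ⟨b.finite_toSet, fun t ht => ⟨hb t ht, trivial⟩⟩

lemma step_countable (hsigma : ∀ x : K, {γ : Γ | e x γ ≠ 0}.Countable)
    {𝓕 : Set (Set K)} (h𝓕 : 𝓕.Countable) {D : Set K} (hD : D.Countable) :
    (step e 𝓕 D).Countable := by
  refine hD.union ?_
  refine Set.Countable.biUnion (h𝓕.insert _) fun F _ => ?_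
  refine Set.Countable.biUnion (bset_countable (Γ := Γ) (suppSet_countable e hsigma hD)) fun b _ => ?_
  exact W_countable e F b

noncomputable def Mseq (𝓕 : Set (Set K)) : ℕ → Set K
  | 0 => ∅
  | n + 1 => step e 𝓕 (Mseq 𝓕 n)

noncomputable def Mfam (𝓕 : Set (Set K)) : Set K := ⋃ n, Mseq e 𝓕 n

lemma Mseq_mono_succ (𝓕 : Set (Set K)) (n : ℕ) : Mseq e 𝓕 n ⊆ Mseq e 𝓕 (n + 1) :=
  subset_step e 𝓕 _

lemma Mseq_mono_le (𝓕 : Set (Set K)) : Monotone (Mseq e 𝓕) :=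
  monotone_nat_of_le_succ (Mseq_mono_succ e 𝓕)

lemma Mseq_mono_fam {𝓕 𝓖 : Set (Set K)} (h : 𝓕 ⊆ 𝓖) (n : ℕ) :
    Mseq e 𝓕 n ⊆ Mseq e 𝓖 n := by
  induction n with
  | zero => exact subset_refl _
  | succ n ih => exact step_mono e h ih

lemma Mfam_mono {𝓕 𝓖 : Set (Set K)} (h : 𝓕 ⊆ 𝓖) : Mfam e 𝓕 ⊆ Mfam e 𝓖 :=
  iUnion_mono fun n => Mseq_mono_fam e h n

lemma Mseq_countable (hsigma : ∀ x : K, {γ : Γ | e x γ ≠ 0}.Countable)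
    {𝓕 : Set (Set K)} (h𝓕 : 𝓕.Countable) (n : ℕ) : (Mseq e 𝓕 n).Countable := by
  induction n with
  | zero => exact countable_empty
  | succ n ih => exact step_countable e hsigma h𝓕 ih

lemma Mfam_countable (hsigma : ∀ x : K, {γ : Γ | e x γ ≠ 0}.Countable)
    {𝓕 : Set (Set K)} (h𝓕 : 𝓕.Countable) : (Mfam e 𝓕).Countable :=
  countable_iUnion (Mseq_countable e hsigma h𝓕)

lemma Mseq_iUnion_subset (s : ℕ → Set (Set K)) (hs : Monotone s) (k : ℕ) :
    Mseq e (⋃ n, s n) k ⊆ ⋃ n, Mseq e (s n) k := by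
  induction k with
  | zero => simp [Mseq]
  | succ k ih =>
    rintro x (hx | hx)
    · obtain ⟨_, ⟨n, rfl⟩, hn⟩ := ih hx
      exact mem_iUnion.mpr ⟨n, Mseq_mono_succ e _ k hn⟩
    · simp only [mem_iUnion, exists_prop] at hx
      obtain ⟨F, hF, b, hb, hxW⟩ := hx
      have hF' : ∃ n₀, F ∈ insert Set.univ (s n₀) := by
        rcases hF with rfl | hF
        · exact ⟨0, mem_insert _ _⟩
        · obtain ⟨_, ⟨n₀, rfl⟩, hn₀⟩ := hF
          exact ⟨n₀, mem_insert_of_mem _ hn₀⟩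
      obtain ⟨n₀, hn₀⟩ := hF'
      have hb' : ∀ t ∈ b, ∃ n, t.1 ∈ suppSet e (Mseq e (s n) k) := by
        intro t ht
        have h1 : t.1 ∈ suppSet e (⋃ n, Mseq e (s n) k) :=
          suppSet_mono e (ih) (hb t ht)
        rw [suppSet_iUnion] at h1
        exact mem_iUnion.mp h1
      choose! g hg using hb'
      set N := max n₀ (b.sup g) with hN
      refine mem_iUnion.mpr ⟨N, ?_⟩
      refine mem_step e ?_ ?_ hxW
      · exact insert_subset_insert (hs (le_max_left _ _)) hn₀
      · intro t ht
        have : g t ≤ N := le_trans (Finset.le_sup ht) (le_max_right _ _)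
        exact suppSet_mono e (Mseq_mono_fam e (hs this) k) (hg t ht)

lemma Mfam_iUnion (s : ℕ → Set (Set K)) (hs : ∀ n, s n ⊆ s (n + 1)) :
    Mfam e (⋃ n, s n) = ⋃ n, Mfam e (s n) := by
  have hmono : Monotone s := monotone_nat_of_le_succ hs
  apply subset_antisymm
  · refine iUnion_subset fun k => ?_
    refine (Mseq_iUnion_subset e s hmono k).trans ?_
    refine iUnion_subset fun n => ?_
    exact (subset_iUnion (fun m => Mseq e (s n) m) k).trans
      (subset_iUnion (fun n => Mfam e (s n)) n)
  · exact iUnion_subset fun n => Mfam_mono e (subset_iUnion s n)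


lemma mem_closure_of_box (𝓕 : Set (Set K)) {F : Set K} (hF : F ∈ insert Set.univ 𝓕)
    {x : K} (hx : x ∈ F) :
    (fun γ => if γ ∈ suppSet e (Mfam e 𝓕) then e x γ else 0) ∈
      closure (e '' (Mfam e 𝓕 ∩ F)) := by
  classical
  set A := suppSet e (Mfam e 𝓕) with hA
  set y : Γ → ℝ := fun γ => if γ ∈ A then e x γ else 0 with hy
  rw [mem_closure_iff]
  intro U hU hyU
  obtain ⟨I, V, hV, hIV⟩ := (isOpen_pi_iff.mp hU) y hyU
  have key : ∀ γ, γ ∈ I → ∃ p q : ℚ, (p : ℝ) < y γ ∧ y γ < (q : ℝ) ∧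
      Set.Ioo (p : ℝ) (q : ℝ) ⊆ V γ := by
    intro γ hγ
    obtain ⟨hVo, hyV⟩ := hV γ hγ
    obtain ⟨ε, hε, hball⟩ := Metric.isOpen_iff.mp hVo (y γ) hyV
    obtain ⟨p, hp1, hp2⟩ := exists_rat_btwn (show y γ - ε < y γ by linarith)
    obtain ⟨q, hq1, hq2⟩ := exists_rat_btwn (show y γ < y γ + ε by linarith)
    refine ⟨p, q, hp2, hq1, ?_⟩
    intro z hz
    apply hball
    rw [Real.ball_eq_Ioo]
    exact ⟨by linarith [hz.1], by linarith [hz.2]⟩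
  choose! p q hpq using key
  set b : Finset (Γ × ℚ × ℚ) :=
    (I.filter (fun γ => γ ∈ A)).image (fun γ => (γ, p γ, q γ)) with hb
  have hxbox : x ∈ F ∩ box e b := by
    refine ⟨hx, ?_⟩
    intro t ht
    simp only [hb, Finset.mem_image, Finset.mem_filter] at ht
    obtain ⟨γ, ⟨hγI, hγA⟩, rfl⟩ := ht
    have h1 := hpq γ hγI
    have h2 : y γ = e x γ := if_pos hγA
    exact ⟨by rw [← h2]; exact h1.1, by rw [← h2]; exact h1.2.1⟩
  have hdom : ∀ t ∈ b, ∃ n, t.1 ∈ suppSet e (Mseq e 𝓕 n) := by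
    intro t ht
    simp only [hb, Finset.mem_image, Finset.mem_filter] at ht
    obtain ⟨γ, ⟨hγI, hγA⟩, rfl⟩ := ht
    have h3 : γ ∈ suppSet e (⋃ n, Mseq e 𝓕 n) := hγA
    rw [suppSet_iUnion] at h3
    exact mem_iUnion.mp h3
  choose! g hg using hdom
  set n := b.sup g with hn
  have hcond : ∀ t ∈ b, t.1 ∈ suppSet e (Mseq e 𝓕 n) := fun t ht =>
    suppSet_mono e (Mseq_mono_le e 𝓕 (Finset.le_sup ht)) (hg t ht)
  obtain ⟨m, hmW, hmF, hmbox⟩ := W_nonempty e ⟨x, hxbox⟩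
  have hmM : m ∈ Mfam e 𝓕 := mem_iUnion.mpr ⟨n + 1, mem_step e hF hcond hmW⟩
  refine ⟨e m, hIV ?_, ⟨m, ⟨hmM, hmF⟩, rfl⟩⟩
  intro γ hγ
  rw [Finset.mem_coe] at hγ
  by_cases hγA : γ ∈ A
  · have hγb : (γ, p γ, q γ) ∈ b :=
      Finset.mem_image_of_mem _ (Finset.mem_filter.mpr ⟨hγ, hγA⟩)
    have h3 := hmbox _ hγb
    exact (hpq γ hγ).2.2 ⟨h3.1, h3.2⟩
  · have h0 : e m γ = 0 := e_zero_of_not_supp e hmM hγA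
    have hy0 : y γ = 0 := if_neg hγA
    rw [h0, ← hy0]
    exact (hV γ hγ).2

noncomputable def retr (𝓕 : Set (Set K)) (x : K) : K :=
  if h : ∃ z : K, e z = fun γ => if γ ∈ suppSet e (Mfam e 𝓕) then e x γ else 0 then
    h.choose else x

section Topology

variable [TopologicalSpace K] [CompactSpace K] [T2Space K]

lemma exists_retr (he : Topology.IsEmbedding e) (𝓕 : Set (Set K)) (x : K) :
    ∃ z : K, e z = fun γ => if γ ∈ suppSet e (Mfam e 𝓕) then e x γ else 0 := by
  have h1 := mem_closure_of_box e 𝓕 (mem_insert Set.univ 𝓕) (mem_univ x)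
  have h2 : closure (e '' (Mfam e 𝓕 ∩ Set.univ)) ⊆ Set.range e := by
    refine closure_minimal ?_ (isCompact_range he.continuous).isClosed
    rintro _ ⟨m, _, rfl⟩; exact mem_range_self m
  obtain ⟨z, hz⟩ := h2 h1
  exact ⟨z, hz⟩

lemma retr_spec (he : Topology.IsEmbedding e) (𝓕 : Set (Set K)) (x : K) :
    e (retr e 𝓕 x) = fun γ => if γ ∈ suppSet e (Mfam e 𝓕) then e x γ else 0 := by
  rw [retr, dif_pos (exists_retr e he 𝓕 x)]
  exact (exists_retr e he 𝓕 x).choose_spec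

lemma retr_continuous (he : Topology.IsEmbedding e) (𝓕 : Set (Set K)) :
    Continuous (retr e 𝓕) := by
  rw [he.continuous_iff]
  have h : (e ∘ retr e 𝓕) = fun x γ => if γ ∈ suppSet e (Mfam e 𝓕) then e x γ else 0 := by
    funext x; exact retr_spec e he 𝓕 x
  rw [h]
  refine continuous_pi fun γ => ?_
  by_cases hγ : γ ∈ suppSet e (Mfam e 𝓕)
  · simp only [if_pos hγ]; exact (continuous_apply γ).comp he.continuous
  · simp only [if_neg hγ]; exact continuous_const

lemma retr_idem (he : Topology.IsEmbedding e) (𝓕 : Set (Set K)) (x : K) :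
    retr e 𝓕 (retr e 𝓕 x) = retr e 𝓕 x := by
  apply he.injective
  funext γ
  have h1 := congrFun (retr_spec e he 𝓕 x) γ
  have h2 := congrFun (retr_spec e he 𝓕 (retr e 𝓕 x)) γ
  rw [h2, h1]
  by_cases hγ : γ ∈ suppSet e (Mfam e 𝓕) <;> simp [hγ]

lemma retr_mem_closure (he : Topology.IsEmbedding e) {𝓕 : Set (Set K)} {F : Set K}
    (hF : F ∈ insert Set.univ 𝓕) {x : K} (hx : x ∈ F) :
    retr e 𝓕 x ∈ closure (Mfam e 𝓕 ∩ F) := by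
  rw [he.toIsInducing.closure_eq_preimage_closure_image (Mfam e 𝓕 ∩ F), mem_preimage,
    retr_spec e he]
  exact mem_closure_of_box e 𝓕 hF hx

lemma retr_fixes_M (he : Topology.IsEmbedding e) {𝓕 : Set (Set K)} {m : K}
    (hm : m ∈ Mfam e 𝓕) : retr e 𝓕 m = m := by
  apply he.injective
  rw [retr_spec e he]
  funext γ
  by_cases hγ : γ ∈ suppSet e (Mfam e 𝓕)
  · simp [hγ]
  · simp [hγ, (e_zero_of_not_supp e hm hγ).symm]

lemma range_retr (he : Topology.IsEmbedding e) (𝓕 : Set (Set K)) :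
    Set.range (retr e 𝓕) = closure (Mfam e 𝓕) := by
  apply subset_antisymm
  · rintro _ ⟨x, rfl⟩
    have h := retr_mem_closure e he (mem_insert Set.univ 𝓕) (mem_univ x)
    rwa [inter_univ] at h
  · refine closure_minimal (fun m hm => ⟨m, retr_fixes_M e he hm⟩)
      (isCompact_range (retr_continuous e he 𝓕)).isClosed

end Topology

end CorsonAux


theorem corson_retractions (K : Type u) [TopologicalSpace K] [CompactSpace K] [T2Space K]
    (Γ : Type*) (e : K → Γ → ℝ) (he : Topology.IsEmbedding e)
    (hsigma : ∀ x : K, {γ : Γ | e x γ ≠ 0}.Countable) :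
    ∃ (M : Set (Set K) → Set K) (r : Set (Set K) → K → K),
      (∀ F : Set (Set K), F.Countable → (∀ A ∈ F, IsClosed A) →
        (M F).Countable ∧ Continuous (r F) ∧ (∀ x, r F (r F x) = r F x) ∧
        (∀ A ∈ F, ∀ x ∈ A, r F x ∈ A) ∧
        Set.range (r F) = closure (M F)) ∧
      (∀ F G : Set (Set K), F.Countable → (∀ A ∈ F, IsClosed A) →
        G.Countable → (∀ A ∈ G, IsClosed A) → F ⊆ G → M F ⊆ M G) ∧
      (∀ s : ℕ → Set (Set K), (∀ n, (s n).Countable) → (∀ n, ∀ A ∈ s n, IsClosed A) →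
        (∀ n, s n ⊆ s (n + 1)) → M (⋃ n, s n) = ⋃ n, M (s n)) := by
  refine ⟨CorsonAux.Mfam e, CorsonAux.retr e, ?_, ?_, ?_⟩
  · intro F hFc hFcl
    refine ⟨CorsonAux.Mfam_countable e hsigma hFc, CorsonAux.retr_continuous e he F,
      CorsonAux.retr_idem e he F, ?_, CorsonAux.range_retr e he F⟩
    intro A hA x hx
    have h1 := CorsonAux.retr_mem_closure e he (Set.mem_insert_of_mem _ hA) hx
    exact ((closure_mono Set.inter_subset_right).trans (hFcl A hA).closure_eq.subset) h1
  · intro F G _ _ _ _ h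
    exact CorsonAux.Mfam_mono e h
  · intro s _ _ hs
    exact CorsonAux.Mfam_iUnion e s hs
end

section
/- Every Corson compact space that is monotonically ω-monolithic is monotonically Sokolov. -/
open Set Cardinal

universe u

set_option linter.unusedSectionVars false
set_option linter.unusedVariables false

section MSAux

section MSAux

variable {K : Type u} [TopologicalSpace K] {Γ : Type*}

/-- helper: a finite set inside a monotone countable union is inside one term -/
lemma msFinite_subset_mono {α : Type*} {B : ℕ → Set α} (hB : Monotone B) {t : Set α}
    (ht : t.Finite) (h : t ⊆ ⋃ n, B n) : ∃ n, t ⊆ B n := by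
  obtain ⟨I, hIfin, hI⟩ := Set.finite_subset_iUnion ht h
  refine ⟨hIfin.toFinset.sup id, fun x hx => ?_⟩
  obtain ⟨i, hiI, hxi⟩ := mem_iUnion₂.1 (hI hx)
  exact hB (Finset.le_sup (f := id) (hIfin.mem_toFinset.2 hiI)) hxi

lemma msUnion_iUnion_mono {α : Type*} {P Q : ℕ → Set α} :
    ((⋃ n, P n) ∪ ⋃ n, Q n) = ⋃ n, (P n ∪ Q n) := by
  apply Subset.antisymm
  · rintro x (hx | hx) <;> obtain ⟨n, hn⟩ := mem_iUnion.1 hx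
    · exact mem_iUnion.2 ⟨n, Or.inl hn⟩
    · exact mem_iUnion.2 ⟨n, Or.inr hn⟩
  · rintro x hx
    obtain ⟨n, hn | hn⟩ := mem_iUnion.1 hx
    · exact Or.inl (mem_iUnion.2 ⟨n, hn⟩)
    · exact Or.inr (mem_iUnion.2 ⟨n, hn⟩)

open scoped Classical in
/-- A countable subset of `C` whose `e`-image is dense in the projection of `e '' C`
to the coordinates in `s` (for `s` finite). -/
noncomputable def msDSet (e : K → Γ → ℝ) (C : Set K) (s : Set Γ) : Set K :=
  if h : s.Finite ∧ Nonempty K then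
    haveI : Finite ↥s := h.1.to_subtype
    haveI : Fintype ↥s := Fintype.ofFinite _
    haveI : Nonempty K := h.2
    Function.invFunOn (fun (x : K) (γ : s) => e x ↑γ) C ''
      (TopologicalSpace.IsSeparable.of_separableSpace
        ((fun (x : K) (γ : s) => e x ↑γ) '' C)).exists_countable_dense_subset.choose
  else ∅

lemma msDSet_subset (e : K → Γ → ℝ) (C : Set K) (s : Set Γ) : msDSet e C s ⊆ C := by
  rw [msDSet]
  split
  · next h =>
    haveI : Finite ↥s := h.1.to_subtype
    haveI : Fintype ↥s := Fintype.ofFinite _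
    haveI : Nonempty K := h.2
    rintro y ⟨z, hz, rfl⟩
    have hspec := (TopologicalSpace.IsSeparable.of_separableSpace
        ((fun (x : K) (γ : s) => e x ↑γ) '' C)).exists_countable_dense_subset.choose_spec
    obtain ⟨w, hwC, hw⟩ := hspec.1 hz
    exact Function.invFunOn_mem ⟨w, hwC, hw⟩
  · exact empty_subset _

lemma msDSet_countable (e : K → Γ → ℝ) (C : Set K) (s : Set Γ) : (msDSet e C s).Countable := by
  rw [msDSet]
  split
  · next h =>
    haveI : Finite ↥s := h.1.to_subtype
    haveI : Fintype ↥s := Fintype.ofFinite _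
    haveI : Nonempty K := h.2
    have hspec := (TopologicalSpace.IsSeparable.of_separableSpace
        ((fun (x : K) (γ : s) => e x ↑γ) '' C)).exists_countable_dense_subset.choose_spec
    exact hspec.2.1.image _
  · exact countable_empty

lemma msDSet_dense (e : K → Γ → ℝ) (C : Set K) {s : Set Γ} (hfin : s.Finite)
    {x : K} (hx : x ∈ C) (U : Γ → Set ℝ) (hU : ∀ γ ∈ s, IsOpen (U γ))
    (hxU : ∀ γ ∈ s, e x γ ∈ U γ) :
    ∃ y ∈ msDSet e C s, ∀ γ ∈ s, e y γ ∈ U γ := by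
  have h : s.Finite ∧ Nonempty K := ⟨hfin, ⟨x⟩⟩
  haveI : Finite ↥s := h.1.to_subtype
  haveI : Fintype ↥s := Fintype.ofFinite _
  haveI : Nonempty K := h.2
  rw [msDSet, dif_pos h]
  set f := fun (x : K) (γ : s) => e x ↑γ with hf
  have hspec := (TopologicalSpace.IsSeparable.of_separableSpace
      (f '' C)).exists_countable_dense_subset.choose_spec
  set t := (TopologicalSpace.IsSeparable.of_separableSpace
      (f '' C)).exists_countable_dense_subset.choose
  have hfx : f x ∈ closure t := hspec.2.2 (mem_image_of_mem f hx)
  have hV : IsOpen (Set.univ.pi fun γ : s => U ↑γ) :=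
    isOpen_set_pi finite_univ fun γ _ => hU ↑γ γ.2
  have hfxV : f x ∈ Set.univ.pi fun γ : s => U ↑γ := fun γ _ => hxU ↑γ γ.2
  obtain ⟨z, hzV, hzt⟩ := (mem_closure_iff.1 hfx) _ hV hfxV
  obtain ⟨w, hwC, hw⟩ := hspec.1 hzt
  refine ⟨Function.invFunOn f C z, mem_image_of_mem _ hzt, fun γ hγ => ?_⟩
  have heq : f (Function.invFunOn f C z) = z := Function.invFunOn_eq ⟨w, hwC, hw⟩
  have := congrFun heq ⟨γ, hγ⟩
  simp only [hf] at this
  rw [this]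
  exact hzV ⟨γ, hγ⟩ trivial
/-- support of a point -/
def msSupp (e : K → Γ → ℝ) (x : K) : Set Γ := {γ | e x γ ≠ 0}

/-- dense collection for all finite subsets of `A` -/
def msCol (e : K → Γ → ℝ) (C : Set K) (A : Set Γ) : Set K :=
  ⋃ s ∈ {s : Set Γ | s.Finite ∧ s ⊆ A}, msDSet e C s

lemma msCol_subset (e : K → Γ → ℝ) (C : Set K) (A : Set Γ) : msCol e C A ⊆ C :=
  iUnion₂_subset fun s _ => msDSet_subset e C s

lemma msCol_countable (e : K → Γ → ℝ) (C : Set K) {A : Set Γ} (hA : A.Countable) :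
    (msCol e C A).Countable :=
  (Set.countable_setOf_finite_subset hA).biUnion fun s _ => msDSet_countable e C s

lemma msCol_mono (e : K → Γ → ℝ) (C : Set K) {A A' : Set Γ} (h : A ⊆ A') :
    msCol e C A ⊆ msCol e C A' :=
  biUnion_subset_biUnion_left fun s hs => ⟨hs.1, hs.2.trans h⟩

lemma msCol_mem {e : K → Γ → ℝ} {C : Set K} {A : Set Γ} {s : Set Γ} (hs : s.Finite)
    (hsA : s ⊆ A) {y : K} (hy : y ∈ msDSet e C s) : y ∈ msCol e C A :=
  mem_iUnion₂.2 ⟨s, ⟨hs, hsA⟩, hy⟩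

lemma msCol_iUnion (e : K → Γ → ℝ) (C : Set K) {A : ℕ → Set Γ} (hA : Monotone A) :
    msCol e C (⋃ n, A n) = ⋃ n, msCol e C (A n) := by
  apply Subset.antisymm
  · rintro x hx
    obtain ⟨s, hs, hxs⟩ := mem_iUnion₂.1 hx
    obtain ⟨n, hn⟩ := msFinite_subset_mono hA hs.1 hs.2
    exact mem_iUnion.2 ⟨n, mem_iUnion₂.2 ⟨s, ⟨hs.1, hn⟩, hxs⟩⟩
  · exact iUnion_subset fun n => msCol_mono e C (subset_iUnion A n)

/-- one closing-off step -/
def msStep (e : K → Γ → ℝ) (F : Set (Set K)) (A : Set Γ) : Set K :=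
  ⋃ C ∈ insert Set.univ F, msCol e C A

lemma msStep_countable (e : K → Γ → ℝ) {F : Set (Set K)} (hF : F.Countable)
    {A : Set Γ} (hA : A.Countable) : (msStep e F A).Countable :=
  (hF.insert _).biUnion fun C _ => msCol_countable e C hA

lemma msStep_mono (e : K → Γ → ℝ) {F F' : Set (Set K)} (hFF : F ⊆ F')
    {A A' : Set Γ} (hAA : A ⊆ A') : msStep e F A ⊆ msStep e F' A' := by
  refine iUnion₂_subset fun C hC => ?_
  exact subset_trans (msCol_mono e C hAA)
    (subset_iUnion₂ (s := fun C _ => msCol e C A') C (insert_subset_insert hFF hC))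

lemma msStep_iUnion (e : K → Γ → ℝ) {F : ℕ → Set (Set K)} (hF : Monotone F)
    {A : ℕ → Set Γ} (hA : Monotone A) :
    msStep e (⋃ n, F n) (⋃ n, A n) = ⋃ n, msStep e (F n) (A n) := by
  apply Subset.antisymm
  · rintro x hx
    obtain ⟨C, hC, hxC⟩ := mem_iUnion₂.1 hx
    rw [msCol_iUnion e C hA] at hxC
    obtain ⟨n, hn⟩ := mem_iUnion.1 hxC
    rcases hC with rfl | hC
    · exact mem_iUnion.2 ⟨n, mem_iUnion₂.2 ⟨_, mem_insert _ _, hn⟩⟩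
    · obtain ⟨m, hm⟩ := mem_iUnion.1 hC
      refine mem_iUnion.2 ⟨max n m, mem_iUnion₂.2 ⟨C, ?_, ?_⟩⟩
      · exact mem_insert_of_mem _ (hF (le_max_right n m) hm)
      · exact msCol_mono e C (hA (le_max_left n m)) hn
  · exact iUnion_subset fun n => msStep_mono e (subset_iUnion F n) (subset_iUnion A n)

/-- the increasing sequence of coordinate sets -/
noncomputable def msGam (e : K → Γ → ℝ) (F : Set (Set K)) : ℕ → Set Γ
  | 0 => ∅
  | n + 1 => msGam e F n ∪ ⋃ x ∈ msStep e F (msGam e F n), msSupp e x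

lemma msGam_mono_nat (e : K → Γ → ℝ) (F : Set (Set K)) : Monotone (msGam e F) :=
  monotone_nat_of_le_succ fun n => subset_union_left

lemma msGam_mono (e : K → Γ → ℝ) {F F' : Set (Set K)} (h : F ⊆ F') (n : ℕ) :
    msGam e F n ⊆ msGam e F' n := by
  induction n with
  | zero => exact subset_rfl
  | succ n ih =>
    apply union_subset_union ih
    refine iUnion₂_subset fun x hx => ?_
    exact subset_iUnion₂ (s := fun x _ => msSupp e x) x (msStep_mono e h ih hx)

lemma msGam_countable (e : K → Γ → ℝ) (hsigma : ∀ x : K, (msSupp e x).Countable)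
    {F : Set (Set K)} (hF : F.Countable) (n : ℕ) : (msGam e F n).Countable := by
  induction n with
  | zero => exact countable_empty
  | succ n ih =>
    exact ih.union ((msStep_countable e hF ih).biUnion fun x _ => hsigma x)

lemma msGam_iUnion (e : K → Γ → ℝ) {F : ℕ → Set (Set K)} (hF : Monotone F) (n : ℕ) :
    msGam e (⋃ m, F m) n = ⋃ m, msGam e (F m) n := by
  induction n with
  | zero => simp [msGam]
  | succ n ih =>
    have hmono : Monotone fun m => msGam e (F m) n := fun a b hab => msGam_mono e (hF hab) n
    have h2 : (⋃ x ∈ msStep e (⋃ m, F m) (msGam e (⋃ m, F m) n), msSupp e x)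
        = ⋃ m, ⋃ x ∈ msStep e (F m) (msGam e (F m) n), msSupp e x := by
      rw [ih, msStep_iUnion e hF hmono]
      apply Subset.antisymm
      · rintro γ hγ
        obtain ⟨x, hx, hγx⟩ := mem_iUnion₂.1 hγ
        obtain ⟨m, hm⟩ := mem_iUnion.1 hx
        exact mem_iUnion.2 ⟨m, mem_iUnion₂.2 ⟨x, hm, hγx⟩⟩
      · refine iUnion_subset fun m => iUnion₂_subset fun x hx => ?_
        exact subset_iUnion₂ (s := fun x _ => msSupp e x) x (mem_iUnion.2 ⟨m, hx⟩)
    show msGam e (⋃ m, F m) n ∪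
        (⋃ x ∈ msStep e (⋃ m, F m) (msGam e (⋃ m, F m) n), msSupp e x) = _
    rw [h2, ih, msUnion_iUnion_mono]
    exact iUnion_congr fun m => rfl

/-- the admissible coordinate set assigned to `F` -/
def msGamU (e : K → Γ → ℝ) (F : Set (Set K)) : Set Γ := ⋃ n, msGam e F n

/-- the countable dense set assigned to `F` -/
def msDD (e : K → Γ → ℝ) (F : Set (Set K)) : Set K := ⋃ n, msStep e F (msGam e F n)

/-- the countable dense subset of `C` assigned to `F` -/
def msDDC (e : K → Γ → ℝ) (F : Set (Set K)) (C : Set K) : Set K :=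
  ⋃ n, msCol e C (msGam e F n)

lemma msDD_countable (e : K → Γ → ℝ) (hsigma : ∀ x : K, (msSupp e x).Countable)
    {F : Set (Set K)} (hF : F.Countable) : (msDD e F).Countable :=
  countable_iUnion fun n => msStep_countable e hF (msGam_countable e hsigma hF n)

lemma msDD_mono (e : K → Γ → ℝ) {F F' : Set (Set K)} (h : F ⊆ F') : msDD e F ⊆ msDD e F' :=
  iUnion_mono fun n => msStep_mono e h (msGam_mono e h n)

lemma msDD_iUnion (e : K → Γ → ℝ) {F : ℕ → Set (Set K)} (hF : Monotone F) :
    msDD e (⋃ m, F m) = ⋃ m, msDD e (F m) := by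
  have : ∀ n, msStep e (⋃ m, F m) (msGam e (⋃ m, F m) n)
      = ⋃ m, msStep e (F m) (msGam e (F m) n) := fun n => by
    rw [msGam_iUnion e hF n, msStep_iUnion e hF (fun a b hab => msGam_mono e (hF hab) n)]
  rw [msDD]
  simp_rw [this]
  rw [iUnion_comm]
  rfl

lemma msDDC_subset (e : K → Γ → ℝ) (F : Set (Set K)) (C : Set K) : msDDC e F C ⊆ C :=
  iUnion_subset fun n => msCol_subset e C _

lemma msDDC_subset_DD (e : K → Γ → ℝ) {F : Set (Set K)} {C : Set K}
    (hC : C ∈ insert Set.univ F) : msDDC e F C ⊆ msDD e F :=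
  iUnion_mono fun n => subset_iUnion₂ (s := fun C _ => msCol e C (msGam e F n)) C hC

lemma msDDC_supp (e : K → Γ → ℝ) {F : Set (Set K)} {C : Set K}
    (hC : C ∈ insert Set.univ F) {y : K} (hy : y ∈ msDDC e F C) :
    msSupp e y ⊆ msGamU e F := by
  obtain ⟨n, hn⟩ := mem_iUnion.1 hy
  have : y ∈ msStep e F (msGam e F n) := mem_iUnion₂.2 ⟨C, hC, hn⟩
  refine subset_trans ?_ (subset_iUnion (msGam e F) (n + 1))
  refine subset_trans (subset_iUnion₂ (s := fun x (_ : x ∈ msStep e F (msGam e F n)) => msSupp e x) y this) ?_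
  exact subset_union_right


open scoped Classical in
/-- the coordinate restriction map -/
noncomputable def msP (e : K → Γ → ℝ) (F : Set (Set K)) (z : Γ → ℝ) : Γ → ℝ :=
  fun γ => if γ ∈ msGamU e F then z γ else 0

lemma msP_continuous (e : K → Γ → ℝ) (F : Set (Set K)) : Continuous (msP e F) := by
  refine continuous_pi fun γ => ?_
  by_cases h : γ ∈ msGamU e F
  · simpa [msP, h] using continuous_apply γ
  · simpa [msP, h] using continuous_const

lemma msP_idem (e : K → Γ → ℝ) (F : Set (Set K)) (z : Γ → ℝ) :
    msP e F (msP e F z) = msP e F z := by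
  funext γ; by_cases h : γ ∈ msGamU e F <;> simp [msP, h]

/-- Main closure lemma: the restriction of a point of `C` lands in the closure of the
image of the assigned countable subset of `C`. -/
lemma msP_mem_closure (e : K → Γ → ℝ) {F : Set (Set K)} {C : Set K}
    (hC : C ∈ insert Set.univ F) {x : K} (hx : x ∈ C) :
    msP e F (e x) ∈ closure (e '' msDDC e F C) := by
  rw [mem_closure_iff]
  intro V hV hPV
  obtain ⟨I, U, hIU, hpi⟩ := isOpen_pi_iff.1 hV _ hPV
  have hfin : ((I : Set Γ) ∩ msGamU e F).Finite := I.finite_toSet.inter_of_left _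
  obtain ⟨n, hn⟩ := msFinite_subset_mono (msGam_mono_nat e F) hfin inter_subset_right
  have hxU : ∀ γ ∈ (I : Set Γ) ∩ msGamU e F, e x γ ∈ U γ := by
    rintro γ ⟨hγI, hγG⟩
    have := (hIU γ hγI).2
    rwa [msP, if_pos hγG] at this
  obtain ⟨y, hy, hyU⟩ := msDSet_dense e C hfin hx U
    (fun γ hγ => (hIU γ hγ.1).1) hxU
  have hyD : y ∈ msDDC e F C := mem_iUnion.2 ⟨n, msCol_mem hfin hn hy⟩
  refine ⟨e y, hpi ?_, mem_image_of_mem e hyD⟩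
  intro γ hγ
  by_cases hγG : γ ∈ msGamU e F
  · exact hyU γ ⟨hγ, hγG⟩
  · have hy0 : e y γ = 0 := by
      by_contra h0
      exact hγG (msDDC_supp e hC hyD h0)
    have h0U : (0 : ℝ) ∈ U γ := by
      have := (hIU γ hγ).2
      rwa [msP, if_neg hγG] at this
    rw [hy0]; exact h0U


end MSAux

theorem monotonicallySokolov_of_corson_monotonicallyOmegaMonolithic
    (K : Type u) [TopologicalSpace K] [CompactSpace K] [T2Space K]
    (Γ : Type*) (e : K → Γ → ℝ) (he : Topology.IsEmbedding e)
    (hsigma : ∀ x : K, {γ : Γ | e x γ ≠ 0}.Countable)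
    (hmono : MonotonicallyOmegaMonolithic K) :
    MonotonicallySokolov K := by
  obtain ⟨O, hO1, hO2, hO3⟩ := hmono
  have hsig : ∀ x : K, (msSupp e x).Countable := hsigma
  -- closed range
  have hrange : IsClosed (range e) := (isCompact_range he.continuous).isClosed
  -- existence of the retraction
  have hex : ∀ (F : Set (Set K)) (x : K), ∃ y, e y = msP e F (e x) := by
    intro F x
    have h1 : msP e F (e x) ∈ closure (e '' msDDC e F Set.univ) :=
      msP_mem_closure e (mem_insert _ _) (mem_univ x)
    have h2 : closure (e '' msDDC e F Set.univ) ⊆ range e := by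
      rw [← hrange.closure_eq]
      exact closure_mono (image_subset_range e _)
    exact h2 h1
  choose r hr using hex
  -- r F is continuous
  have hrc : ∀ F, Continuous (r F) := by
    intro F
    rw [he.toIsInducing.continuous_iff]
    have : e ∘ r F = fun x => msP e F (e x) := funext fun x => hr F x
    rw [this]
    exact (msP_continuous e F).comp he.continuous
  -- r F is idempotent
  have hridem : ∀ F x, r F (r F x) = r F x := by
    intro F x
    apply he.injective
    rw [hr, hr, msP_idem]
  -- invariance
  have hrinv : ∀ (F : Set (Set K)), ∀ C ∈ insert Set.univ F, ∀ x ∈ C,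
      r F x ∈ closure (msDDC e F C) := by
    intro F C hC x hx
    rw [he.closure_eq_preimage_closure_image, mem_preimage, hr]
    exact msP_mem_closure e hC hx
  refine ⟨r, fun F => O (msDD e F), ?_, ?_, ?_⟩
  · intro F hFc hFcl
    have hDDc : (msDD e F).Countable := msDD_countable e hsig hFc
    refine ⟨hrc F, hridem F, ?_, (hO1 _ hDDc).1, ?_⟩
    · intro A hA x hx
      have h1 : r F x ∈ closure (msDDC e F A) :=
        hrinv F A (mem_insert_of_mem _ hA) x hx
      exact ((hFcl A hA).closure_eq ▸ closure_mono (msDDC_subset e F A)) h1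
    · rintro a ⟨x, rfl⟩ U hU haU
      have hmem : r F x ∈ closure (msDD e F) :=
        closure_mono (msDDC_subset_DD e (mem_insert _ _))
          (hrinv F Set.univ (mem_insert _ _) x (mem_univ x))
      exact (hO1 _ hDDc).2 _ hmem U hU haU
  · intro F G hF _ hG _ hFG
    exact hO2 _ _ (msDD_countable e hsig hF) (msDD_countable e hsig hG) (msDD_mono e hFG)
  · intro s hsc _ hmonoS
    have hm : Monotone s := monotone_nat_of_le_succ hmonoS
    show O (msDD e (⋃ n, s n)) = ⋃ n, O (msDD e (s n))
    rw [msDD_iUnion e hm]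
    exact hO3 (fun n => msDD e (s n)) (fun n => msDD_countable e hsig (hsc n))
      (fun n => msDD_mono e (hmonoS n))
end MSAux
end

section
/- A compact Hausdorff space K is monotonically ω-monolithic if and only if it is monotonically monolithic (i.e., monotonically κ-monolithic for every infinite cardinal κ). -/
open Set Cardinal

universe u

/-!
Restricting to `κ = ℵ₀` gives one direction. Conversely, let `O` be an ω-monotone operator and put
`O' A = ⋃ {O F | F ⊆ A finite, nonempty}`. Continuity of `O` along countable chains gives
`O C = O' C` for countable `C`, so `O' A` is an external network of `closure A` as soon as every
point of `closure A` lies in the closure of a countable subset of `A`.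

That countable tightness is where compactness enters. Otherwise some ω-closed set `B` is not
closed, and a point of `closure B \ B` yields a free sequence `(x α)_{α < ω₁}`. For limit `δ`, a
cluster point `y δ` of `(x β)_{β < δ}` lies in some `P δ ∈ O (x '' Iio δ)` missing the closure of
the tail `x '' Ico δ ω₁`; as `y δ'` lies in that closure for `δ < δ'`, `P` is injective. By
continuity `P δ ∈ O (x '' Iio β)` for some `β < δ`, and pressing down puts uncountably many `P δ`
into a single countable `O (x '' Iio β₀)`.
-/

open scoped Ordinal
open Order

namespace Ordinal

theorem countable_Iio_of_lt_omega_one {o : Ordinal} (ho : o < ω₁) : (Iio o).Countable := by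
  rw [← le_aleph0_iff_set_countable, Cardinal.mk_Iio_ordinal, lift_le_aleph0, ← lt_succ_iff,
    succ_aleph0]
  exact lt_omega_iff_card_lt.mp ho

theorem countable_Iic_of_lt_omega_one {o : Ordinal} (ho : o < ω₁) : (Iic o).Countable := by
  rw [← Iio_succ]
  exact countable_Iio_of_lt_omega_one ((isSuccLimit_omega 1).succ_lt ho)

theorem exists_lt_omega_one_forall_lt {s : Set Ordinal} (hs : s.Countable)
    (hs₁ : ∀ o ∈ s, o < ω₁) : ∃ b < ω₁, ∀ o ∈ s, o < b := by
  have := hs.to_subtype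
  refine ⟨⨆ o : s, succ (o : Ordinal), iSup_lt_omega_one fun o =>
    (isSuccLimit_omega 1).succ_lt (hs₁ o o.2), fun o ho => ?_⟩
  exact (lt_succ o).trans_le (Ordinal.le_iSup (fun o : s => succ (o : Ordinal)) ⟨o, ho⟩)

theorem exists_not_countable_setOf_le
    {f : {δ : Ordinal // δ < ω₁ ∧ IsSuccLimit δ} → Ordinal} (hf : ∀ δ, f δ < δ) :
    ∃ β < ω₁, ¬ {δ | f δ ≤ β}.Countable := by
  by_contra! hcount
  have hbound : ∀ β < ω₁, ∃ b < ω₁, ∀ δ, f δ ≤ β → (δ : Ordinal) < b := fun β hβ =>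
    (exists_lt_omega_one_forall_lt ((hcount β hβ).image Subtype.val)
      (by rintro _ ⟨δ, -, rfl⟩; exact δ.2.1)).imp fun b hb =>
        ⟨hb.1, fun δ hδ => hb.2 δ ⟨δ, hδ, rfl⟩⟩
  choose! g hg₁ hg₂ using hbound
  -- `d (n + 1)` exceeds every `δ` with `f δ ≤ d n`, so `δ = ⨆ n, d n` cannot have `f δ < δ`.
  set d : ℕ → Ordinal := fun n => (fun β => max (g β) (succ β))^[n] 0
  have hd_succ : ∀ n, d (n + 1) = max (g (d n)) (succ (d n)) := fun n =>
    Function.iterate_succ_apply' _ n 0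
  have hd : ∀ n, d n < ω₁ := by
    intro n
    induction n with
    | zero => exact omega_pos 1
    | succ n ih => rw [hd_succ]; exact max_lt (hg₁ _ ih) ((isSuccLimit_omega 1).succ_lt ih)
  have hd_lt : ∀ n, d n < d (n + 1) := fun n =>
    (lt_succ (d n)).trans_le (hd_succ n ▸ le_max_right _ _)
  have hle : ∀ n, d n ≤ ⨆ n, d n := Ordinal.le_iSup d
  have hlim : IsSuccLimit (⨆ n, d n) := by
    by_contra hlim
    obtain ⟨n, hn⟩ := exists_eq_ciSup_of_not_isSuccLimit bddAbove_of_small hlim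
    exact (hd_lt n).not_ge (hn ▸ hle (n + 1))
  let δ : {δ : Ordinal // δ < ω₁ ∧ IsSuccLimit δ} := ⟨⨆ n, d n, iSup_lt_omega_one hd, hlim⟩
  obtain ⟨n, hn⟩ := Ordinal.lt_iSup_iff.mp (hf δ)
  have := hg₂ (d n) (hd n) δ hn.le
  exact (this.trans_le ((hd_succ n ▸ le_max_left _ _).trans (hle (n + 1)))).false

end Ordinal

section OmegaMonotone

variable {α γ : Type*}

structure IsOmegaMonotone (O : Set α → Set γ) : Prop where
  mono : ∀ A B : Set α, A.Countable → B.Countable → A ⊆ B → O A ⊆ O B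
  iUnion_nat : ∀ s : ℕ → Set α, (∀ n, (s n).Countable) → (∀ n, s n ⊆ s (n + 1)) →
    O (⋃ n, s n) = ⋃ n, O (s n)

theorem IsOmegaMonotone.iUnion_of_directed {O : Set α → Set γ} (hO : IsOmegaMonotone O)
    {ι : Type*} [Countable ι] [Nonempty ι] {s : ι → Set α} (hs : Directed (· ⊆ ·) s)
    (hc : ∀ i, (s i).Countable) : O (⋃ i, s i) = ⋃ i, O (s i) := by
  have := Encodable.ofCountable ι
  inhabit ι
  set t := s ∘ hs.sequence s
  have ht : ⋃ n, t n = ⋃ i, s i :=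
    (iUnion_subset fun n => subset_iUnion s _).antisymm
      (iUnion_subset fun i => (hs.le_sequence i).trans (subset_iUnion t _))
  refine le_antisymm ?_ (iUnion_subset fun i => hO.mono _ _ (hc i) (countable_iUnion hc)
    (subset_iUnion s i))
  rw [← ht, hO.iUnion_nat t (fun n => hc _) hs.sequence_mono_nat]
  exact iUnion_subset fun n => subset_iUnion (O ∘ s) _

theorem IsOmegaMonotone.image_Iio_of_isSuccLimit {O : Set α → Set γ} (hO : IsOmegaMonotone O)
    (x : Ordinal → α) {δ : Ordinal} (hδ : δ < ω₁) (hlim : IsSuccLimit δ) :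
    O (x '' Iio δ) = ⋃ β : Iio δ, O (x '' Iio β) := by
  have := (Ordinal.countable_Iio_of_lt_omega_one hδ).to_subtype
  have : Nonempty (Iio δ) := ⟨⟨0, hlim.pos⟩⟩
  have hx : x '' Iio δ = ⋃ β : Iio δ, x '' Iio β := by
    refine subset_antisymm ?_ (iUnion_subset fun β => image_mono (Iio_subset_Iio β.2.le))
    rintro _ ⟨β, hβ, rfl⟩
    exact mem_iUnion.mpr ⟨⟨succ β, hlim.succ_lt hβ⟩, mem_image_of_mem x (lt_succ β)⟩
  rw [hx, hO.iUnion_of_directed (s := fun β : Iio δ => x '' Iio β)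
    (Monotone.directed_le fun β β' h => image_mono (Iio_subset_Iio h))
    fun β => (Ordinal.countable_Iio_of_lt_omega_one (β.2.trans hδ)).image x]

def nonemptyFiniteSubsets (A : Set α) : Set (Set α) :=
  {F | F.Finite ∧ F.Nonempty ∧ F ⊆ A}

/-- Only nonempty `F` are used so that `finitaryExtension O ∅ = ∅`, as the chain condition
demands for the empty chain. -/
def finitaryExtension (O : Set α → Set γ) (A : Set α) : Set γ :=
  ⋃ F ∈ nonemptyFiniteSubsets A, O F

theorem finitaryExtension_mono (O : Set α → Set γ) : Monotone (finitaryExtension O) :=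
  fun _ _ hAB => biUnion_subset_biUnion_left fun _ hF => ⟨hF.1, hF.2.1, hF.2.2.trans hAB⟩

theorem finitaryExtension_iUnion (O : Set α → Set γ) {ι : Type*} {A : ι → Set α}
    (hA : Directed (· ⊆ ·) A) :
    finitaryExtension O (⋃ i, A i) = ⋃ i, finitaryExtension O (A i) := by
  refine subset_antisymm ?_ (iUnion_subset fun i => finitaryExtension_mono O (subset_iUnion A i))
  refine iUnion₂_subset fun F hFA => ?_
  obtain ⟨hF, ⟨a, ha⟩, hFA⟩ := hFA
  have : Nonempty ι := (mem_iUnion.mp (hFA ha)).nonempty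
  obtain ⟨i, hi⟩ := hA.exists_mem_subset_of_finset_subset_biUnion (s := hF.toFinset)
    (by rwa [hF.coe_toFinset])
  rw [hF.coe_toFinset] at hi
  exact (subset_biUnion_of_mem (u := O) (⟨hF, ⟨a, ha⟩, hi⟩ : F ∈ nonemptyFiniteSubsets (A i))).trans
    (subset_iUnion (fun i => finitaryExtension O (A i)) i)

theorem mk_nonemptyFiniteSubsets_le (A : Set α) : #(nonemptyFiniteSubsets A) ≤ #A + ℵ₀ := by
  have hrange : nonemptyFiniteSubsets A ⊆
      range fun t : Finset A => Subtype.val '' (t : Set A) := by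
    rintro F ⟨hF, -, hFA⟩
    lift F to Set A using hFA
    lift F to Finset A using hF.of_finite_image Subtype.val_injective.injOn
    exact mem_range_self _
  refine (mk_le_mk_of_subset hrange).trans (mk_range_le.trans ?_)
  rcases finite_or_infinite A with hA | hA
  · exact mk_le_aleph0.trans le_add_self
  · exact (mk_finset_of_infinite A).le.trans le_self_add

theorem mk_finitaryExtension_le {α γ : Type u} {O : Set α → Set γ}
    (hO : ∀ F : Set α, F.Finite → (O F).Countable) (A : Set α) :
    #(finitaryExtension O A) ≤ #A + ℵ₀ :=
  calc #(finitaryExtension O A)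
      ≤ #(nonemptyFiniteSubsets A) * ⨆ F : nonemptyFiniteSubsets A, #(O F) := mk_biUnion_le _ _
    _ ≤ (#A + ℵ₀) * ℵ₀ :=
        mul_le_mul' (mk_nonemptyFiniteSubsets_le A) (ciSup_le' fun F => (hO F F.2.1).le_aleph0)
    _ = #A + ℵ₀ := mul_eq_left le_add_self le_add_self aleph0_ne_zero

theorem IsOmegaMonotone.eq_finitaryExtension {O : Set α → Set γ} (hO : IsOmegaMonotone O)
    {C : Set α} (hC : C.Countable) (hne : C.Nonempty) : O C = finitaryExtension O C := by
  set 𝓕 := nonemptyFiniteSubsets C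
  have : Countable 𝓕 :=
    ((countable_ofPred_finite_subset hC).mono
      (fun _ hF => ⟨hF.1, hF.2.2⟩ : 𝓕 ⊆ {F | F.Finite ∧ F ⊆ C})).to_subtype
  have : Nonempty 𝓕 := ⟨⟨{hne.some}, finite_singleton _, singleton_nonempty _,
    singleton_subset_iff.mpr hne.some_mem⟩⟩
  have hdir : Directed (· ⊆ ·) fun F : 𝓕 => (F : Set α) := fun F G =>
    ⟨⟨F ∪ G, F.2.1.union G.2.1, F.2.2.1.inl, union_subset F.2.2.2 G.2.2.2⟩,
      subset_union_left, subset_union_right⟩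
  have hC : ⋃ F : 𝓕, (F : Set α) = C :=
    (iUnion_subset fun F => F.2.2.2).antisymm fun c hc =>
      mem_iUnion.mpr ⟨⟨{c}, finite_singleton c, singleton_nonempty c,
        singleton_subset_iff.mpr hc⟩, rfl⟩
  rw [finitaryExtension, biUnion_eq_iUnion, ← hO.iUnion_of_directed hdir
    (fun F => F.2.1.countable), hC]

end OmegaMonotone

theorem WellFoundedLT.exists_forall_of_forall_exists {α β : Type*} [LT α] [WellFoundedLT α]
    [Nonempty β] (Q : α → (α → β) → β → Prop)
    (hQ : ∀ a x y p, (∀ b < a, x b = y b) → Q a x p → Q a y p)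
    (h : ∀ a x, (∀ b < a, Q b x (x b)) → ∃ p, Q a x p) :
    ∃ x : α → β, ∀ a, Q a x (x a) := by
  classical
  let extend (a : α) (g : ∀ b < a, β) : α → β := fun b =>
    if hb : b < a then g b hb else Classical.arbitrary β
  let step (a : α) (g : ∀ b < a, β) : β :=
    if hp : ∃ p, Q a (extend a g) p then hp.choose else Classical.arbitrary β
  let x := WellFoundedLT.fix step
  have hext : ∀ a, ∀ b < a, extend a (fun b _ => x b) b = x b := fun a b hb => dif_pos hb
  refine ⟨x, fun a => WellFoundedLT.induction (motive := fun a => Q a x (x a)) a fun a IH => ?_⟩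
  have hp : ∃ p, Q a (extend a fun b _ => x b) p :=
    (h a x IH).imp fun p => hQ a x _ p fun b hb => (hext a b hb).symm
  have hxa : x a = hp.choose := (WellFoundedLT.fix_eq step a).trans (dif_pos hp)
  exact hxa ▸ hQ a _ x _ (hext a) hp.choose_spec

section Topology

variable {K : Type*} [TopologicalSpace K]

def IsOmegaClosed (B : Set K) : Prop :=
  ∀ C ⊆ B, C.Countable → closure C ⊆ B

def omegaClosure (A : Set K) : Set K :=
  ⋃ C ∈ {C : Set K | C ⊆ A ∧ C.Countable}, closure C

theorem subset_omegaClosure (A : Set K) : A ⊆ omegaClosure A := fun a ha =>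
  mem_biUnion (show {a} ∈ {C : Set K | C ⊆ A ∧ C.Countable} from
    ⟨singleton_subset_iff.mpr ha, countable_singleton a⟩) (subset_closure rfl)

theorem isOmegaClosed_omegaClosure (A : Set K) : IsOmegaClosed (omegaClosure A) := by
  intro C hC hCc
  have hD : ∀ c : C, ∃ D ⊆ A, D.Countable ∧ (c : K) ∈ closure D := fun c => by
    simpa [omegaClosure, and_assoc] using hC c.2
  choose D hDA hDc hcD using hD
  have := hCc.to_subtype
  have hE : C ⊆ closure (⋃ c, D c) := fun c hc =>
    closure_mono (subset_iUnion D ⟨c, hc⟩) (hcD ⟨c, hc⟩)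
  exact (closure_minimal hE isClosed_closure).trans (subset_biUnion_of_mem
    (u := closure) (show ⋃ c, D c ∈ {C : Set K | C ⊆ A ∧ C.Countable} from
      ⟨iUnion_subset hDA, countable_iUnion hDc⟩))

def IsFreeSequence (x : Ordinal → K) : Prop :=
  ∀ γ < ω₁, Disjoint (closure (x '' Iio γ)) (closure (x '' Ico γ ω₁))

def IsOmegaNetworkOperator (O : Set K → Set (Set K)) : Prop :=
  ∀ A : Set K, A.Countable → (O A).Countable ∧ IsExternalNetwork K (O A) (closure A)

variable [CompactSpace K]

theorem IsOmegaClosed.exists_mem_forall_notMem {B : Set K} (hB : IsOmegaClosed B) {z : K}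
    (hz : z ∈ closure B) {ι : Type*} [Countable ι] (V : ι → Set K) (hV : ∀ i, IsOpen (V i))
    (hzV : ∀ i, z ∉ closure (V i)) : ∃ p ∈ B, ∀ i, p ∉ V i := by
  set W : ι → Set K := fun i => (closure (V i))ᶜ
  have hW : ∀ u : Finset ι, ∃ a ∈ B, ∀ i ∈ u, a ∈ W i := fun u => by
    obtain ⟨a, haW, haB⟩ := mem_closure_iff.mp hz (⋂ i ∈ u, W i)
      (isOpen_biInter_finset fun i _ => isClosed_closure.isOpen_compl) (mem_iInter₂.mpr
        fun i _ => hzV i)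
    exact ⟨a, haB, fun i hi => mem_iInter₂.mp haW i hi⟩
  choose a haB haW using hW
  obtain ⟨p, hpD, hpW⟩ := isClosed_closure.isCompact.inter_iInter_nonempty
    (fun i => closure (W i ∩ range a)) (fun _ => isClosed_closure) fun u =>
      ⟨a u, subset_closure (mem_range_self u),
        mem_iInter₂.mpr fun i hi => subset_closure ⟨haW u i hi, mem_range_self u⟩⟩
  refine ⟨p, hB _ (range_subset_iff.mpr haB) (countable_range a) hpD, fun i hpV => ?_⟩
  have : p ∈ closure (W i) := closure_mono inter_subset_left (mem_iInter.mp hpW i)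
  rw [closure_compl] at this
  exact this (hV i |>.subset_interior_closure hpV)

theorem exists_forall_mem_closure_image_Ico {ι : Type*} [LinearOrder ι] (x : ι → K) {δ : ι}
    (hδ : (Iio δ).Nonempty) : ∃ y, ∀ β < δ, y ∈ closure (x '' Ico β δ) := by
  have := hδ.to_subtype
  have hdir : Directed (· ⊇ ·) fun β : Iio δ => closure (x '' Ico (β : ι) δ) :=
    Antitone.directed_ge fun β β' h => closure_mono (image_mono (Ico_subset_Ico_left h))
  obtain ⟨y, hy⟩ := IsCompact.nonempty_iInter_of_directed_nonempty_isCompact_isClosed _ hdir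
    (fun β => ⟨x β, subset_closure (mem_image_of_mem x ⟨le_rfl, β.2⟩)⟩)
    (fun _ => isClosed_closure.isCompact) fun _ => isClosed_closure
  exact ⟨y, fun β hβ => mem_iInter.mp hy ⟨β, hβ⟩⟩

variable [T2Space K]

theorem exists_isOpen_superset_notMem_closure {s : Set K} (hs : IsClosed s) {z : K} (hz : z ∉ s) :
    ∃ V, IsOpen V ∧ s ⊆ V ∧ z ∉ closure V := by
  obtain ⟨V, hV, hsV, hVz⟩ :=
    normal_exists_closure_subset hs isOpen_compl_singleton (subset_compl_singleton_iff.mpr hz)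
  exact ⟨V, hV, hsV, fun h => hVz h rfl⟩

theorem IsOmegaClosed.exists_isFreeSequence {B : Set K} (hB : IsOmegaClosed B) {z : K}
    (hzB : z ∈ closure B) (hz : z ∉ B) : ∃ x : Ordinal → K, IsFreeSequence x := by
  have hzC : ∀ C ⊆ B, C.Countable → z ∉ closure C := fun C hCB hC hzC => hz (hB C hCB hC hzC)
  have hsep : ∀ C : Set K, ∃ V, z ∉ closure C → IsOpen V ∧ closure C ⊆ V ∧ z ∉ closure V := by
    intro C
    by_cases hC : z ∈ closure C
    · exact ⟨∅, fun h => (h hC).elim⟩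
    · obtain ⟨V, hV⟩ := exists_isOpen_superset_notMem_closure isClosed_closure hC
      exact ⟨V, fun _ => hV⟩
  choose V hV using hsep
  have : Nonempty K := ⟨z⟩
  have hxC : ∀ (x : Ordinal → K) (γ : Ordinal), γ < ω₁ → (∀ β < γ, x β ∈ B) →
      z ∉ closure (x '' Iio γ) := fun x γ hγ hx =>
    hzC _ (image_subset_iff.mpr hx) ((Ordinal.countable_Iio_of_lt_omega_one hγ).image x)
  obtain ⟨x, hx⟩ := WellFoundedLT.exists_forall_of_forall_exists
    (fun α x p => α < ω₁ → p ∈ B ∧ ∀ γ ≤ α, p ∉ V (x '' Iio γ))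
    (fun α x y p hxy hp hα => ⟨(hp hα).1, fun γ hγ => by
      rw [← image_congr (s := Iio γ) fun β hβ => hxy β (lt_of_lt_of_le hβ hγ)]
      exact (hp hα).2 γ hγ⟩)
    (by
      intro α x IH
      by_cases hα : α < ω₁
      swap
      · exact ⟨z, fun h => (hα h).elim⟩
      have hz' : ∀ γ : Iic α, z ∉ closure (x '' Iio γ) := fun γ =>
        hxC x γ (γ.2.trans_lt hα) fun β hβ =>
          (IH β (hβ.trans_le γ.2) ((hβ.trans_le γ.2).trans hα)).1
      have := (Ordinal.countable_Iic_of_lt_omega_one hα).to_subtype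
      obtain ⟨p, hpB, hp⟩ := hB.exists_mem_forall_notMem hzB (fun γ : Iic α => V (x '' Iio γ))
        (fun γ => (hV _ (hz' γ)).1) fun γ => (hV _ (hz' γ)).2.2
      exact ⟨p, fun _ => ⟨hpB, fun γ hγ => hp ⟨γ, hγ⟩⟩⟩)
  refine ⟨x, fun γ hγ => ?_⟩
  have hVγ := hV _ (hxC x γ hγ fun β hβ => (hx β (hβ.trans hγ)).1)
  refine Disjoint.mono hVγ.2.1 (closure_minimal ?_ hVγ.1.isClosed_compl) disjoint_compl_right
  rintro _ ⟨β, ⟨hγβ, hβ⟩, rfl⟩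
  exact (hx β hβ).2 γ hγβ

end Topology

section Monolithic

variable {K : Type u} [TopologicalSpace K] [CompactSpace K] {O : Set K → Set (Set K)}

theorem not_isFreeSequence
    (hnet : IsOmegaNetworkOperator O)
    (hO : IsOmegaMonotone O) (x : Ordinal → K) : ¬ IsFreeSequence x := by
  intro hx
  let C : Ordinal → Set K := fun γ => x '' Iio γ
  have hC : ∀ γ < ω₁, (C γ).Countable := fun γ hγ =>
    (Ordinal.countable_Iio_of_lt_omega_one hγ).image x
  let L := {δ : Ordinal // δ < ω₁ ∧ IsSuccLimit δ}
  have hyP : ∀ δ : L, ∃ y P, (∀ β < (δ : Ordinal), y ∈ closure (x '' Ico β δ)) ∧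
      P ∈ O (C δ) ∧ y ∈ P ∧ P ⊆ (closure (x '' Ico (δ : Ordinal) ω₁))ᶜ := by
    rintro ⟨δ, hδ, hlim⟩
    obtain ⟨y, hy⟩ := exists_forall_mem_closure_image_Ico x ⟨0, hlim.pos⟩
    have hyC : y ∈ closure (C δ) := closure_mono (image_mono Ico_subset_Iio_self) (hy 0 hlim.pos)
    obtain ⟨P, hPO, hyP, hP⟩ := (hnet _ (hC δ hδ)).2 y hyC _ isClosed_closure.isOpen_compl
      fun hyT => disjoint_left.mp (hx δ hδ) hyC hyT
    exact ⟨y, P, hy, hPO, hyP, hP⟩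
  choose y P hy hPO hyP hP using hyP
  have hP_ne : ∀ δ₁ δ₂ : L, (δ₁ : Ordinal) < δ₂ → P δ₁ ≠ P δ₂ := fun δ₁ δ₂ h hPP =>
    hP δ₁ (hPP ▸ hyP δ₂) (closure_mono (image_mono (Ico_subset_Ico_right δ₂.2.1.le)) (hy δ₂ δ₁ h))
  have hP_inj : Function.Injective P := fun δ₁ δ₂ hPP => by
    by_contra hne
    rcases (Subtype.coe_injective.ne hne).lt_or_gt with h | h
    exacts [hP_ne _ _ h hPP, hP_ne _ _ h hPP.symm]
  have hP_reg : ∀ δ : L, ∃ β < (δ : Ordinal), P δ ∈ O (C β) := fun δ => by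
    obtain ⟨β, hβ⟩ := mem_iUnion.mp (hO.image_Iio_of_isSuccLimit x δ.2.1 δ.2.2 ▸ hPO δ)
    exact ⟨β, β.2, hβ⟩
  choose f hf hPf using hP_reg
  obtain ⟨β₀, hβ₀, hS⟩ := Ordinal.exists_not_countable_setOf_le hf
  refine hS (MapsTo.countable_of_injOn (fun δ hδ => ?_) hP_inj.injOn (hnet _ (hC β₀ hβ₀)).1)
  exact hO.mono _ _ (hC _ (lt_of_le_of_lt hδ hβ₀)) (hC β₀ hβ₀)
    (image_mono (Iio_subset_Iio hδ)) (hPf δ)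

variable [T2Space K]

theorem IsOmegaClosed.isClosed
    (hnet : IsOmegaNetworkOperator O)
    (hO : IsOmegaMonotone O) {B : Set K} (hB : IsOmegaClosed B) : IsClosed B := by
  refine closure_subset_iff_isClosed.mp fun z hzB => ?_
  by_contra hz
  obtain ⟨x, hx⟩ : ∃ x : Ordinal.{0} → K, IsFreeSequence x := hB.exists_isFreeSequence hzB hz
  exact not_isFreeSequence hnet hO x hx

theorem exists_countable_subset_mem_closure
    (hnet : IsOmegaNetworkOperator O)
    (hO : IsOmegaMonotone O) {A : Set K} {z : K} (hz : z ∈ closure A) :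
    ∃ C ⊆ A, C.Countable ∧ z ∈ closure C := by
  have hclosed := (isOmegaClosed_omegaClosure A).isClosed hnet hO
  have := closure_minimal (subset_omegaClosure A) hclosed hz
  simpa [omegaClosure, and_assoc] using this

theorem isExternalNetwork_finitaryExtension
    (hnet : IsOmegaNetworkOperator O)
    (hO : IsOmegaMonotone O) (A : Set K) :
    IsExternalNetwork K (finitaryExtension O A) (closure A) := by
  intro z hz U hU hzU
  obtain ⟨C, hCA, hC, hzC⟩ := exists_countable_subset_mem_closure hnet hO hz
  obtain ⟨P, hPO, hzP, hPU⟩ := (hnet C hC).2 z hzC U hU hzU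
  rw [hO.eq_finitaryExtension hC (closure_nonempty_iff.mp ⟨z, hzC⟩)] at hPO
  exact ⟨P, finitaryExtension_mono O hCA hPO, hzP, hPU⟩

end Monolithic

theorem MonotonicallyOmegaMonolithic.monotonicallyMonolithic {K : Type u} [TopologicalSpace K]
    [CompactSpace K] [T2Space K] (h : MonotonicallyOmegaMonolithic K) :
    MonotonicallyMonolithic K := by
  obtain ⟨O, hnet, hmono, hchain⟩ := h
  have hO : IsOmegaMonotone O := ⟨hmono, hchain⟩
  intro κ _
  refine ⟨finitaryExtension O, fun A _ => ⟨?_, isExternalNetwork_finitaryExtension hnet hO A⟩,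
    fun A B _ _ hAB => finitaryExtension_mono O hAB,
    fun ι _ _ A hA _ => finitaryExtension_iUnion O hA.directed_le⟩
  exact mk_finitaryExtension_le (fun F hF => (hnet F hF.countable).1) A

theorem MonotonicallyMonolithic.monotonicallyOmegaMonolithic {T : Type u} [TopologicalSpace T]
    (h : MonotonicallyMonolithic T) : MonotonicallyOmegaMonolithic T := by
  obtain ⟨O, hnet, hmono, hchain⟩ := h ℵ₀ le_rfl
  refine ⟨O, fun A hA => ⟨?_, (hnet A hA.le_aleph0).2⟩,
    fun A B hA hB => hmono A B hA.le_aleph0 hB.le_aleph0, fun s hs hsucc => ?_⟩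
  · rw [← le_aleph0_iff_set_countable]
    calc #(O A) ≤ #A + ℵ₀ := (hnet A hA.le_aleph0).1
      _ ≤ ℵ₀ := add_le_aleph0.mpr ⟨hA.le_aleph0, le_rfl⟩
  · have h := hchain (ULift.{u} ℕ) (mk_le_aleph0_iff.mpr inferInstance) (fun n => s n.down)
      (fun m n hmn => monotone_nat_of_le_succ hsucc (ULift.down_le.mpr hmn))
      fun n => (hs n.down).le_aleph0
    rwa [ULift.down_surjective.iUnion_comp (fun n => s n),
      ULift.down_surjective.iUnion_comp (fun n => O (s n))] at h

theorem monotonicallyOmegaMonolithic_iff_monotonicallyMonolithic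
    (K : Type u) [TopologicalSpace K] [CompactSpace K] [T2Space K] :
    MonotonicallyOmegaMonolithic K ↔ MonotonicallyMonolithic K :=
  ⟨MonotonicallyOmegaMonolithic.monotonicallyMonolithic,
    MonotonicallyMonolithic.monotonicallyOmegaMonolithic⟩
end

section
/- Every Collins-Roscoe space is monotonically monolithic. -/
open Set Cardinal

universe u

/-! A Collins-Roscoe assignment `𝒪` is already a monotone monolithity operator: send `A` to
`⋃ x ∈ A, 𝒪 x`. This is an external network of `cl A` by assumption, it has at most
`|A| · ℵ₀ ≤ |A| + ℵ₀` members, and a union indexed by `A` is monotone in `A` and commutes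
with unions of chains. -/

theorem Cardinal.mk_biUnion_le_add_aleph0 {α β : Type u} {f : α → Set β}
    (hf : ∀ x, (f x).Countable) (A : Set α) : #(⋃ x ∈ A, f x) ≤ #A + ℵ₀ :=
  calc #(⋃ x ∈ A, f x) ≤ #A * ⨆ x : A, #(f x) := mk_biUnion_le f A
    _ ≤ (#A + ℵ₀) * (#A + ℵ₀) :=
        mul_le_mul' le_self_add (ciSup_le' fun x => (mk_le_aleph0_iff.mpr (hf x)).trans le_add_self)
    _ = #A + ℵ₀ := mul_eq_self le_add_self

theorem CollinsRoscoe.monotonicallyKappaMonolithic {T : Type u} [TopologicalSpace T]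
    (h : CollinsRoscoe T) (κ : Cardinal.{u}) : MonotonicallyKappaMonolithic T κ := by
  obtain ⟨O, hO_countable, hO_network⟩ := h
  exact ⟨fun A => ⋃ x ∈ A, O x,
    fun A _ => ⟨mk_biUnion_le_add_aleph0 hO_countable A, hO_network A⟩,
    fun _ _ _ _ hAB => biUnion_subset_biUnion_left hAB,
    fun _ _ _ A _ _ => biUnion_iUnion A O⟩

theorem monotonicallyMonolithic_of_collinsRoscoe
    (T : Type u) [TopologicalSpace T] (h : CollinsRoscoe T) :
    MonotonicallyMonolithic T :=
  fun κ _ => h.monotonicallyKappaMonolithic κ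
end

section
/- Every compact Hausdorff Collins-Roscoe space is monotonically Sokolov. -/
open Set Cardinal

universe u

/-!
For a countable family `F` of closed sets, close off a countable set `D = D(F)` in ω steps: at each
step, for every `A ∈ F ∪ {K}` and every finite family `γ` of Urysohn functions separating pairs of
members of `⋃ x ∈ D, 𝒪 x` with disjoint closures, add a countable subset of `A` whose image under
`γ` is dense in that of `A`. By the Collins-Roscoe property these Urysohn functions `G` separate
the points of `cl D`, so the evaluation `q : K → ℝ^G` is injective on the compact set `cl D`, and
the closing-off gives `q(A) ⊆ q(cl D ∩ A)`. Hence `r = (q|cl D)⁻¹ ∘ q` is a continuous retraction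
onto `cl D` with `r(A) ⊆ A`, and `⋃ x ∈ D, 𝒪 x` is a countable external network of `cl D`. Since
each step ranges over *all* finite `γ`, `D(F)` is monotone and ω-continuous in `F`.
-/

open Topology TopologicalSpace

theorem Set.Countable.setOf_finset_subset {α : Type*} {s : Set α} (hs : s.Countable) :
    {γ : Finset α | ↑γ ⊆ s}.Countable := by
  classical
  have := hs.to_subtype
  refine (countable_range fun t : Finset s => t.map (Function.Embedding.subtype _)).mono ?_
  intro γ hγ
  exact ⟨γ.subtype (· ∈ s), Finset.subtype_map_of_mem hγ⟩

theorem exists_countable_subset_image_subset_closure {X Y : Type*} [TopologicalSpace Y]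
    [PseudoMetrizableSpace Y] [SeparableSpace Y] (f : X → Y) (A : Set X) :
    ∃ E ⊆ A, E.Countable ∧ f '' A ⊆ closure (f '' E) := by
  obtain ⟨t, htA, htc, hAt⟩ :=
    (IsSeparable.of_separableSpace (f '' A)).exists_countable_dense_subset
  have hpre : ∀ y ∈ t, ∃ x ∈ A, f x = y := fun y hy => htA hy
  choose g hgA hgf using hpre
  have := htc.to_subtype
  refine ⟨range fun y : t => g y y.2, range_subset_iff.2 fun y => hgA y y.2, countable_range _, ?_⟩
  rwa [← range_comp, show f ∘ (fun y : t => g y y.2) = Subtype.val from funext fun y => hgf y y.2,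
    Subtype.range_val]

theorem mem_closure_of_forall_finset_restrict {ι : Type*} {π : ι → Type*}
    [∀ i, TopologicalSpace (π i)] {z : ∀ i, π i} {S : Set (∀ i, π i)}
    (h : ∀ I : Finset ι, I.restrict z ∈ closure (I.restrict '' S)) : z ∈ closure S := by
  rw [mem_closure_iff_nhds]
  intro U hU
  rw [nhds_pi, Filter.mem_pi'] at hU
  obtain ⟨I, t, ht, hIU⟩ := hU
  have hV : (univ.pi fun i : I => t i) ∈ 𝓝 (I.restrict z) :=
    set_pi_mem_nhds finite_univ fun i _ => ht i
  obtain ⟨_, hw, s, hs, rfl⟩ := mem_closure_iff_nhds.1 (h I) _ hV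
  exact ⟨s, hIU fun i hi => hw ⟨i, hi⟩ (mem_univ _), hs⟩

theorem image_subset_image_closure_inter {X Z : Type*} [TopologicalSpace X] [CompactSpace X]
    [TopologicalSpace Z] [T2Space Z] {q : X → Z} (hq : Continuous q) {A D : Set X}
    (hA : IsClosed A) (h : q '' A ⊆ closure (q '' (D ∩ A))) : q '' A ⊆ q '' (closure D ∩ A) :=
  h.trans <| closure_minimal (image_mono (inter_subset_inter_left _ subset_closure))
    ((isClosed_closure.inter hA).isCompact.image hq).isClosed

theorem exists_retraction_of_injOn {X Z : Type*} [TopologicalSpace X] [TopologicalSpace Z]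
    [T2Space Z] {q : X → Z} (hq : Continuous q) {Y : Set X} (hY : IsCompact Y)
    (hinj : InjOn q Y) (hsurj : range q ⊆ q '' Y) :
    ∃ r : X → X, Continuous r ∧ (∀ x, r (r x) = r x) ∧ range r ⊆ Y ∧
      ∀ A : Set X, q '' A ⊆ q '' (Y ∩ A) → MapsTo r A A := by
  have hex : ∀ x, ∃ y ∈ Y, q y = q x := fun x => hsurj (mem_range_self x)
  choose r hrY hrq using hex
  have hr_eq : ∀ x, ∀ y ∈ Y, q y = q x → r x = y := fun x y hy hqy =>
    hinj (hrY x) hy ((hrq x).trans hqy.symm)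
  refine ⟨r, ?_, fun x => hr_eq _ _ (hrY x) rfl, range_subset_iff.2 hrY, ?_⟩
  · have := isCompact_iff_compactSpace.1 hY
    have hemb : IsEmbedding fun y : Y => q y :=
      ((hq.comp continuous_subtype_val).isClosedEmbedding hinj.injective).isEmbedding
    have hr : Continuous fun x => (⟨r x, hrY x⟩ : Y) :=
      hemb.continuous_iff.2 (by convert hq using 1; exact funext hrq)
    exact continuous_subtype_val.comp hr
  · intro A hA x hx
    obtain ⟨y, ⟨hyY, hyA⟩, hqy⟩ := hA (mem_image_of_mem q hx)
    rwa [hr_eq x y hyY hqy]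

section Evaluation

variable {X : Type*} [TopologicalSpace X]

def evalMap (Γ : Set C(X, ℝ)) (x : X) : Γ → ℝ := fun g => g.1 x

theorem continuous_evalMap (Γ : Set C(X, ℝ)) : Continuous (evalMap Γ) :=
  continuous_pi fun g => g.1.continuous

theorem evalMap_mem_closure_of_forall_finset {Γ : Set C(X, ℝ)} {x : X} {E : Set X}
    (h : ∀ γ : Finset C(X, ℝ), ↑γ ⊆ Γ → evalMap γ x ∈ closure (evalMap γ '' E)) :
    evalMap Γ x ∈ closure (evalMap Γ '' E) := by
  classical
  refine mem_closure_of_forall_finset_restrict fun I => ?_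
  let γ := I.map (Function.Embedding.subtype _)
  have hγ : ↑γ ⊆ Γ := by
    intro g hg
    obtain ⟨g, -, rfl⟩ := Finset.mem_map.1 hg
    exact g.2
  let φ : (↑γ → ℝ) → (I → ℝ) := fun w i => w ⟨i.1.1, Finset.mem_map_of_mem _ i.2⟩
  have hφ : Continuous φ := continuous_pi fun i => continuous_apply _
  have hcomp : ∀ y, φ (evalMap (γ : Set C(X, ℝ)) y) = I.restrict (evalMap Γ y) := fun y => rfl
  rw [← hcomp, image_image, ← funext hcomp, ← image_image]
  exact image_closure_subset_closure_image hφ (mem_image_of_mem φ (h γ hγ))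

noncomputable def approxSet (A : Set X) (γ : Finset C(X, ℝ)) : Set X :=
  (exists_countable_subset_image_subset_closure (evalMap (γ : Set C(X, ℝ))) A).choose

theorem approxSet_subset (A : Set X) (γ : Finset C(X, ℝ)) : approxSet A γ ⊆ A :=
  (exists_countable_subset_image_subset_closure (evalMap (γ : Set C(X, ℝ))) A).choose_spec.1

theorem approxSet_countable (A : Set X) (γ : Finset C(X, ℝ)) : (approxSet A γ).Countable :=
  (exists_countable_subset_image_subset_closure (evalMap (γ : Set C(X, ℝ))) A).choose_spec.2.1

theorem image_evalMap_subset_closure_approxSet (A : Set X) (γ : Finset C(X, ℝ)) :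
    evalMap (γ : Set C(X, ℝ)) '' A ⊆ closure (evalMap (γ : Set C(X, ℝ)) '' approxSet A γ) :=
  (exists_countable_subset_image_subset_closure (evalMap (γ : Set C(X, ℝ))) A).choose_spec.2.2

theorem image_evalMap_subset_closure_inter {Γ : Set C(X, ℝ)} {A D : Set X}
    (hD : ∀ γ : Finset C(X, ℝ), ↑γ ⊆ Γ → approxSet A γ ⊆ D) :
    evalMap Γ '' A ⊆ closure (evalMap Γ '' (D ∩ A)) := by
  rintro _ ⟨x, hx, rfl⟩
  refine evalMap_mem_closure_of_forall_finset fun γ hγ => ?_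
  have hE : approxSet A γ ⊆ D ∩ A := subset_inter (hD γ hγ) (approxSet_subset A γ)
  exact closure_mono (image_mono hE) (image_evalMap_subset_closure_approxSet A γ ⟨x, hx, rfl⟩)

noncomputable def urysohnFn (P Q : Set X) : C(X, ℝ) :=
  Classical.epsilon fun f : C(X, ℝ) => EqOn f 0 (closure P) ∧ EqOn f 1 (closure Q)

theorem eqOn_urysohnFn [NormalSpace X] {P Q : Set X} (h : Disjoint (closure P) (closure Q)) :
    EqOn (urysohnFn P Q) 0 (closure P) ∧ EqOn (urysohnFn P Q) 1 (closure Q) :=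
  have ⟨f, h0, h1, _⟩ := exists_continuous_zero_one_of_isClosed isClosed_closure isClosed_closure h
  Classical.epsilon_spec (p := fun f : C(X, ℝ) => EqOn f 0 (closure P) ∧ EqOn f 1 (closure Q))
    ⟨f, h0, h1⟩

end Evaluation

namespace CollinsRoscoe

variable {X : Type u} [TopologicalSpace X] (O : X → Set (Set X))

-- Pairs whose closures meet only contribute harmless junk functions.
def separators (S : Set X) : Set C(X, ℝ) :=
  image2 urysohnFn (⋃ x ∈ S, O x) (⋃ x ∈ S, O x)

theorem separators_mono {S T : Set X} (h : S ⊆ T) : separators O S ⊆ separators O T :=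
  image2_subset (biUnion_subset_biUnion_left h) (biUnion_subset_biUnion_left h)

theorem separators_countable (hO : ∀ x, (O x).Countable) {S : Set X} (hS : S.Countable) :
    (separators O S).Countable :=
  have hN := hS.biUnion fun x _ => hO x
  hN.image2 hN _

theorem separators_iUnion_subset {S : ℕ → Set X} (hS : Monotone S) :
    separators O (⋃ n, S n) ⊆ ⋃ n, separators O (S n) := by
  rintro _ ⟨P, hP, Q, hQ, rfl⟩
  rw [biUnion_iUnion, mem_iUnion] at hP hQ
  obtain ⟨i, hP⟩ := hP
  obtain ⟨j, hQ⟩ := hQ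
  exact mem_iUnion.2 ⟨max i j, mem_image2_of_mem
    (biUnion_subset_biUnion_left (hS (le_max_left i j)) hP)
    (biUnion_subset_biUnion_left (hS (le_max_right i j)) hQ)⟩

theorem exists_finset_subset_separators {S : ℕ → Set X} (hS : Monotone S) {γ : Finset C(X, ℝ)}
    (hγ : ↑γ ⊆ separators O (⋃ n, S n)) : ∃ n, ↑γ ⊆ separators O (S n) :=
  have hdir := Monotone.directed_le fun _ _ h => separators_mono O (hS h)
  hdir.exists_mem_subset_of_finset_subset_biUnion (hγ.trans (separators_iUnion_subset O hS))

theorem injOn_evalMap_separators [T4Space X]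
    (hO : ∀ A : Set X, IsExternalNetwork X (⋃ x ∈ A, O x) (closure A)) (D : Set X) :
    InjOn (evalMap (separators O D)) (closure D) := by
  intro y hy y' hy' hq
  by_contra hne
  obtain ⟨U, hyU, hU, V, hy'V, hV, hUV⟩ := exists_open_nhds_disjoint_closure hne
  obtain ⟨P, hPD, hyP, hPU⟩ := hO D y hy U hU hyU
  obtain ⟨Q, hQD, hy'Q, hQV⟩ := hO D y' hy' V hV hy'V
  have hPQ : Disjoint (closure P) (closure Q) := hUV.mono (closure_mono hPU) (closure_mono hQV)
  have hsep := congr_fun hq ⟨urysohnFn P Q, mem_image2_of_mem hPD hQD⟩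
  rw [evalMap, evalMap, (eqOn_urysohnFn hPQ).1 (subset_closure hyP),
    (eqOn_urysohnFn hPQ).2 (subset_closure hy'Q)] at hsep
  exact zero_ne_one hsep

def closureStep (F : Set (Set X)) (S : Set X) : Set X :=
  S ∪ ⋃ A ∈ insert Set.univ F, ⋃ γ ∈ {γ : Finset C(X, ℝ) | ↑γ ⊆ separators O S}, approxSet A γ

theorem closureStep_mono {F F' : Set (Set X)} {S S' : Set X} (hF : F ⊆ F') (hS : S ⊆ S') :
    closureStep O F S ⊆ closureStep O F' S' :=
  union_subset_union hS <| biUnion_mono (insert_subset_insert hF) fun _ _ =>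
    biUnion_mono (fun _ hγ => hγ.trans (separators_mono O hS)) fun _ _ => subset_rfl

theorem closureStep_countable (hO : ∀ x, (O x).Countable) {F : Set (Set X)} {S : Set X}
    (hF : F.Countable) (hS : S.Countable) : (closureStep O F S).Countable :=
  hS.union <| (hF.insert Set.univ).biUnion fun A _ =>
    (separators_countable O hO hS).setOf_finset_subset.biUnion fun γ _ => approxSet_countable A γ

theorem closureStep_iUnion_subset {F : ℕ → Set (Set X)} {S : ℕ → Set X} (hF : Monotone F)
    (hS : Monotone S) : closureStep O (⋃ k, F k) (⋃ k, S k) ⊆ ⋃ k, closureStep O (F k) (S k) := by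
  rintro x (hx | hx)
  · obtain ⟨k, hk⟩ := mem_iUnion.1 hx
    exact mem_iUnion.2 ⟨k, Or.inl hk⟩
  · simp only [mem_iUnion₂] at hx
    obtain ⟨A, hA, γ, hγ, hx⟩ := hx
    obtain ⟨i, hi⟩ : ∃ i, A ∈ insert Set.univ (F i) := by
      rcases hA with rfl | hA
      · exact ⟨0, mem_insert _ _⟩
      · obtain ⟨i, hi⟩ := mem_iUnion.1 hA
        exact ⟨i, mem_insert_of_mem _ hi⟩
    obtain ⟨j, hj⟩ := exists_finset_subset_separators O hS hγ
    exact mem_iUnion.2 ⟨max i j, Or.inr <| mem_biUnion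
      (insert_subset_insert (hF (le_max_left i j)) hi)
      (mem_biUnion (hj.trans (separators_mono O (hS (le_max_right i j)))) hx)⟩

def stage (F : Set (Set X)) : ℕ → Set X
  | 0 => ∅
  | n + 1 => closureStep O F (stage F n)

theorem stage_monotone (F : Set (Set X)) : Monotone (stage O F) :=
  monotone_nat_of_le_succ fun _ => subset_union_left

theorem stage_mono_left {F F' : Set (Set X)} (h : F ⊆ F') : ∀ n, stage O F n ⊆ stage O F' n
  | 0 => subset_rfl
  | n + 1 => closureStep_mono O h (stage_mono_left h n)

theorem stage_countable (hO : ∀ x, (O x).Countable) {F : Set (Set X)} (hF : F.Countable) :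
    ∀ n, (stage O F n).Countable
  | 0 => countable_empty
  | n + 1 => closureStep_countable O hO hF (stage_countable hO hF n)

theorem stage_iUnion {F : ℕ → Set (Set X)} (hF : Monotone F) :
    ∀ n, stage O (⋃ k, F k) n = ⋃ k, stage O (F k) n
  | 0 => iUnion_empty.symm
  | n + 1 => by
    refine subset_antisymm ?_ (iUnion_subset fun k => stage_mono_left O (subset_iUnion F k) _)
    calc stage O (⋃ k, F k) (n + 1) = closureStep O (⋃ k, F k) (⋃ k, stage O (F k) n) := by
          rw [← stage_iUnion hF n]; rfl
      _ ⊆ _ := closureStep_iUnion_subset O hF fun _ _ h => stage_mono_left O (hF h) n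

def saturation (F : Set (Set X)) : Set X :=
  ⋃ n, stage O F n

theorem saturation_countable (hO : ∀ x, (O x).Countable) {F : Set (Set X)} (hF : F.Countable) :
    (saturation O F).Countable :=
  countable_iUnion (stage_countable O hO hF)

theorem saturation_mono {F F' : Set (Set X)} (h : F ⊆ F') : saturation O F ⊆ saturation O F' :=
  iUnion_mono (stage_mono_left O h)

theorem saturation_iUnion {F : ℕ → Set (Set X)} (hF : Monotone F) :
    saturation O (⋃ k, F k) = ⋃ k, saturation O (F k) := by
  simp only [saturation, stage_iUnion O hF]
  exact iUnion_comm _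

theorem approxSet_subset_saturation {F : Set (Set X)} {A : Set X} (hA : A ∈ insert Set.univ F)
    {γ : Finset C(X, ℝ)} (hγ : ↑γ ⊆ separators O (saturation O F)) :
    approxSet A γ ⊆ saturation O F := by
  obtain ⟨n, hn⟩ := exists_finset_subset_separators O (stage_monotone O F) hγ
  exact fun x hx => mem_iUnion.2 ⟨n + 1, Or.inr (mem_biUnion hA (mem_biUnion hn hx))⟩

theorem exists_retraction_onto_closure_saturation [CompactSpace X] [T2Space X]
    (hO : ∀ A : Set X, IsExternalNetwork X (⋃ x ∈ A, O x) (closure A)) (F : Set (Set X)) :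
    ∃ r : X → X, Continuous r ∧ (∀ x, r (r x) = r x) ∧ (∀ A ∈ F, IsClosed A → MapsTo r A A) ∧
      range r ⊆ closure (saturation O F) := by
  set D := saturation O F
  have hq := continuous_evalMap (separators O D)
  have himage : ∀ A ∈ insert Set.univ F, IsClosed A →
      evalMap (separators O D) '' A ⊆ evalMap (separators O D) '' (closure D ∩ A) :=
    fun A hA hAc => image_subset_image_closure_inter hq hAc
      (image_evalMap_subset_closure_inter fun _ hγ => approxSet_subset_saturation O hA hγ)
  obtain ⟨r, hrc, hrr, hrD, hrA⟩ := exists_retraction_of_injOn hq isClosed_closure.isCompact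
    (injOn_evalMap_separators O hO D)
    (by simpa only [image_univ, inter_univ] using himage Set.univ (mem_insert _ _) isClosed_univ)
  exact ⟨r, hrc, hrr, fun A hA hAc => hrA A (himage A (mem_insert_of_mem _ hA) hAc), hrD⟩

end CollinsRoscoe

theorem monotonicallySokolov_of_compact_collinsRoscoe
    (K : Type u) [TopologicalSpace K] [CompactSpace K] [T2Space K]
    (h : CollinsRoscoe K) : MonotonicallySokolov K := by
  obtain ⟨O, hOc, hO⟩ := h
  choose r hr using CollinsRoscoe.exists_retraction_onto_closure_saturation O hO
  refine ⟨r, fun F => ⋃ x ∈ CollinsRoscoe.saturation O F, O x, ?_, ?_, ?_⟩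
  · intro F hF hFc
    obtain ⟨hrc, hrr, hrA, hrD⟩ := hr F
    exact ⟨hrc, hrr, fun A hA => hrA A hA (hFc A hA),
      (CollinsRoscoe.saturation_countable O hOc hF).biUnion fun x _ => hOc x,
      fun a ha => hO _ a (hrD ha)⟩
  · intro F G _ _ _ _ hFG
    exact biUnion_subset_biUnion_left (CollinsRoscoe.saturation_mono O hFG)
  · intro s _ _ hs
    dsimp only
    rw [CollinsRoscoe.saturation_iUnion O (monotone_nat_of_le_succ hs), biUnion_iUnion]
end

section
/- Let T be a monotonically ω-monolithic space of countable tightness. Then T is monotonically monolithic. -/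
open Set Cardinal

universe u

/-! Extend the ω-monolithic operator `O` to arbitrary sets by
`Õ(A) = ⋃ {O F | F ⊆ A finite, nonempty}`. Since `O` commutes with increasing countable unions,
`O B ⊆ Õ(B)` for every countable nonempty `B`; by countable tightness every point of `cl A` lies in
the closure of such a `B ⊆ A`, so `Õ(A)` is an external network of `cl A`. Finite subsets of a
directed union lie in one member, which gives the chain condition, and `Õ(A)` is a union of
`|A| + ℵ₀` countable families. -/

section FinsetExtension

variable {α : Type*}

-- `F` is nonempty because `O ∅` may be nonempty while the union over an empty chain is empty.
def finsetExtension (O : Set α → Set (Set α)) (A : Set α) : Set (Set α) :=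
  ⋃ F : {F : Finset α // F.Nonempty ∧ ↑F ⊆ A}, O F

variable {O : Set α → Set (Set α)}

lemma subset_finsetExtension {A : Set α} {F : Finset α} (hne : F.Nonempty) (hFA : ↑F ⊆ A) :
    O F ⊆ finsetExtension O A :=
  subset_iUnion_of_subset ⟨F, hne, hFA⟩ le_rfl

lemma finsetExtension_mono : Monotone (finsetExtension O) := fun _ _ hAB =>
  iUnion_subset fun F => subset_finsetExtension F.2.1 (F.2.2.trans hAB)

lemma finsetExtension_iUnion {ι : Type*} (A : ι → Set α) (hA : Directed (· ⊆ ·) A) :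
    finsetExtension O (⋃ i, A i) = ⋃ i, finsetExtension O (A i) := by
  refine (iUnion_subset fun F => ?_).antisymm
    (iUnion_subset fun i => finsetExtension_mono (subset_iUnion A i))
  obtain ⟨F, hne, hF⟩ := F
  have : Nonempty ι := by
    obtain ⟨i, -⟩ := mem_iUnion.1 (hF hne.choose_spec)
    exact ⟨i⟩
  obtain ⟨i, hi⟩ := hA.exists_mem_subset_of_finset_subset_biUnion hF
  exact (subset_finsetExtension hne hi).trans (subset_iUnion (fun i => finsetExtension O (A i)) i)

lemma Set.Countable.exists_monotone_finset_iUnion_eq {B : Set α} (hB : B.Countable)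
    (hne : B.Nonempty) :
    ∃ s : ℕ → Finset α, Monotone s ∧ (∀ n, (s n).Nonempty) ∧ ⋃ n, (s n : Set α) = B := by
  classical
  obtain ⟨f, rfl⟩ := hB.exists_eq_range hne
  refine ⟨fun n => (Finset.range (n + 1)).image f, fun m n hmn => ?_, fun n => ?_, ?_⟩
  · exact Finset.image_subset_image (Finset.range_subset_range.2 (by omega))
  · exact ⟨f 0, Finset.mem_image_of_mem f (by simp)⟩
  · ext x
    simp only [mem_iUnion, Finset.coe_image, Finset.coe_range, mem_image, mem_Iio, mem_range]
    exact ⟨fun ⟨_, k, _, hk⟩ => ⟨k, hk⟩, fun ⟨k, hk⟩ => ⟨k, k, by omega, hk⟩⟩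

lemma subset_finsetExtension_of_countable
    (hO : ∀ s : ℕ → Set α, (∀ n, (s n).Countable) → (∀ n, s n ⊆ s (n + 1)) →
      O (⋃ n, s n) = ⋃ n, O (s n))
    {B : Set α} (hB : B.Countable) (hne : B.Nonempty) :
    O B ⊆ finsetExtension O B := by
  obtain ⟨s, hmono, hsne, rfl⟩ := hB.exists_monotone_finset_iUnion_eq hne
  rw [hO (fun n => s n) (fun n => (s n).countable_toSet)
    (fun n => Finset.coe_subset.2 (hmono n.le_succ))]
  exact iUnion_subset fun n =>
    subset_finsetExtension (hsne n) (subset_iUnion (fun n => (s n : Set α)) n)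

lemma mk_finset_le_max (β : Type*) : #(Finset β) ≤ max ℵ₀ #β := by
  classical
  exact (mk_le_of_surjective List.toFinset_surjective).trans (mk_list_le_max β)

lemma mk_finsetExtension_le (hO : ∀ F : Finset α, (O F).Countable) (A : Set α) :
    #(finsetExtension O A) ≤ #A + ℵ₀ := by
  have hindex : #{F : Finset α // F.Nonempty ∧ ↑F ⊆ A} ≤ #A + ℵ₀ :=
    calc #{F : Finset α // F.Nonempty ∧ ↑F ⊆ A}
        ≤ #{F : Finset α // ∀ a ∈ F, a ∈ A} :=
          mk_le_of_injective (f := fun F => ⟨F.1, fun _ ha => F.2.2 ha⟩)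
            fun _ _ h => Subtype.ext (congrArg Subtype.val h :)
      _ = #(Finset A) := mk_congr (Equiv.finsetSubtypeComm (· ∈ A)).symm
      _ ≤ max ℵ₀ #A := mk_finset_le_max A
      _ = #A + ℵ₀ := by rw [add_eq_max' le_rfl, max_comm]
  calc #(finsetExtension O A) ≤ _ := mk_iUnion_le _
    _ ≤ (#A + ℵ₀) * ℵ₀ := mul_le_mul' hindex (ciSup_le' fun F => (hO F.1).le_aleph0)
    _ = #A + ℵ₀ := by rw [mul_eq_max le_add_self le_rfl, max_eq_left le_add_self]

end FinsetExtension

lemma isExternalNetwork_finsetExtension {T : Type*} [TopologicalSpace T]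
    (ht : ∀ A : Set T, ∀ x ∈ closure A, ∃ B ⊆ A, B.Countable ∧ x ∈ closure B)
    {O : Set T → Set (Set T)}
    (hO : ∀ A : Set T, A.Countable → IsExternalNetwork T (O A) (closure A))
    (hOω : ∀ s : ℕ → Set T, (∀ n, (s n).Countable) → (∀ n, s n ⊆ s (n + 1)) →
      O (⋃ n, s n) = ⋃ n, O (s n))
    (A : Set T) : IsExternalNetwork T (finsetExtension O A) (closure A) := by
  intro x hx U hU hxU
  obtain ⟨B, hBA, hB, hxB⟩ := ht A x hx
  obtain ⟨P, hP, hxP, hPU⟩ := hO B hB x hxB U hU hxU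
  have hPA : P ∈ finsetExtension O A :=
    finsetExtension_mono hBA
      (subset_finsetExtension_of_countable hOω hB (closure_nonempty_iff.1 ⟨x, hxB⟩) hP)
  exact ⟨P, hPA, hxP, hPU⟩

theorem monotonicallyMonolithic_of_omegaMonolithic_countableTightness
    (T : Type u) [TopologicalSpace T]
    (ht : ∀ A : Set T, ∀ x ∈ closure A, ∃ B ⊆ A, B.Countable ∧ x ∈ closure B)
    (h : MonotonicallyOmegaMonolithic T) :
    MonotonicallyMonolithic T := by
  obtain ⟨O, hO, -, hOω⟩ := h
  intro κ _
  refine ⟨finsetExtension O, fun A _ => ⟨?_, ?_⟩, fun A B _ _ hAB => finsetExtension_mono hAB,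
    fun ι _ _ A hA _ => finsetExtension_iUnion A hA.directed_le⟩
  · exact mk_finsetExtension_le (fun F => (hO F F.countable_toSet).1) A
  · exact isExternalNetwork_finsetExtension ht (fun A hA => (hO A hA).2) hOω A
end
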